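/- arXiv:2408.02281 — 6 statements merged into one kernel-verified Lean document; each statement's English description precedes it below -/
import Mathlib

section
/- For n ≥ 1 and pairwise distinct p, z_1, ..., z_N with n < N, the identity Δ^{-1} ∑_{i=1}^N (1/(p - z_i)) ∂^n Δ/∂z_i^n = (1/(n+1)) (∂/∂p + ∑_{i=1}^N 1/(p - z_i))^{n+1} · 1 holds, where the right side means the operator applied to the constant function 1 in the variable p. -/
/-!
Write `W = ∏ᵢ (X - zᵢ)` and `gᵢ = W / (X - zᵢ)`. Since `∂ + W'/W = W⁻¹ ∘ ∂ ∘ W`, the right-hand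
side is `W⁽ⁿ⁺¹⁾(p) / ((n + 1) W(p))`; as `deg W⁽ⁿ⁺¹⁾ < N`, Lagrange interpolation at the nodes
`zᵢ` expands it into partial fractions with residues
`W⁽ⁿ⁺¹⁾(zᵢ) / ((n + 1) W'(zᵢ)) = gᵢ⁽ⁿ⁾(zᵢ) / gᵢ(zᵢ)`.
On the left, `Δ` as a polynomial in `zᵢ` alone is a nonzero constant multiple of `gᵢ`, so
`(∂ⁿΔ/∂zᵢⁿ) / Δ` is the same ratio `gᵢ⁽ⁿ⁾(zᵢ) / gᵢ(zᵢ)`.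
-/

open MvPolynomial

/-- The Vandermonde determinant as a multivariate polynomial in z_1,...,z_N. -/
noncomputable def vandPoly (N : ℕ) : MvPolynomial (Fin N) ℝ :=
  ∏ i : Fin N, ∏ j ∈ Finset.univ.filter (fun j => i < j), (X i - X j)

/-- `Qiter f s p` is `(∂/∂p + f(p))^s · 1` : iterated application of
(derivative + multiplication by `f`) to the constant function 1, evaluated at `p`. -/
noncomputable def Qiter (f : ℝ → ℝ) : ℕ → ℝ → ℝ
  | 0 => fun _ => 1
  | s + 1 => fun p => deriv (Qiter f s) p + f p * Qiter f s p

namespace Polynomial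

theorem iterate_derivative_X_sub_C_mul {R : Type*} [CommRing R] (a : R) (g : R[X]) (k : ℕ) :
    derivative^[k + 1] ((X - C a) * g) =
      (X - C a) * derivative^[k + 1] g + (k + 1) • derivative^[k] g := by
  rw [sub_mul, iterate_derivative_sub, mul_comm X g, iterate_derivative_mul_X,
    iterate_derivative_C_mul, Nat.add_sub_cancel]
  ring

theorem degree_iterate_derivative_le {R : Type*} [Semiring R] (p : R[X]) (k : ℕ) :
    (derivative^[k] p).degree ≤ p.degree := by
  induction k with
  | zero => exact le_rfl
  | succ k ih =>
    rw [Function.iterate_succ_apply']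
    exact degree_derivative_le.trans ih

end Polynomial

open Polynomial in
theorem Associated.eval_iterate_derivative_div_eval {K : Type*} [Field K] {P Q : K[X]}
    (h : Associated P Q) (n : ℕ) (x : K) :
    eval x (derivative^[n] Q) / eval x Q = eval x (derivative^[n] P) / eval x P := by
  obtain ⟨u, rfl⟩ := h
  obtain ⟨c, hc, hu⟩ := Polynomial.isUnit_iff.mp u.isUnit
  rw [← hu, mul_comm, iterate_derivative_C_mul, Polynomial.eval_mul, Polynomial.eval_mul,
    Polynomial.eval_C, mul_div_mul_left _ _ hc.ne_zero]

namespace Lagrange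

open Polynomial Finset

variable {F ι : Type*} [Field F] {s : Finset ι} {v : ι → F}

theorem eval_derivative_nodal_div_eval_nodal {x : F} (hx : eval x (nodal s v) ≠ 0) :
    eval x (derivative (nodal s v)) / eval x (nodal s v) = ∑ i ∈ s, 1 / (x - v i) := by
  classical
  rw [derivative_nodal, eval_finsetSum, sum_div]
  refine sum_congr rfl fun i hi => ?_
  rw [nodal_eq_mul_nodal_erase hi, Polynomial.eval_mul] at hx ⊢
  rw [div_mul_cancel_right₀ (right_ne_zero_of_mul hx), one_div, Polynomial.eval_sub,
    Polynomial.eval_X, Polynomial.eval_C]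

theorem eval_div_eval_nodal (hvs : Set.InjOn v s) {P : F[X]} (hP : P.degree < #s) {x : F}
    (hx : ∀ i ∈ s, x ≠ v i) :
    eval x P / eval x (nodal s v) =
      ∑ i ∈ s, eval (v i) P / eval (v i) (derivative (nodal s v)) / (x - v i) := by
  classical
  conv_lhs => rw [eq_interpolate hvs hP, eval_interpolate_not_at_node _ hx,
    mul_div_cancel_left₀ _ (eval_nodal_not_at_node hx)]
  refine sum_congr rfl fun i hi => ?_
  rw [nodalWeight_eq_eval_derivative_nodal hi]
  ring

theorem eval_iterate_derivative_nodal_at_node [DecidableEq ι] {i : ι} (hi : i ∈ s) (k : ℕ) :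
    eval (v i) (derivative^[k + 1] (nodal s v)) =
      (k + 1) * eval (v i) (derivative^[k] (nodal (s.erase i) v)) := by
  simp [nodal_eq_mul_nodal_erase hi, iterate_derivative_X_sub_C_mul, nsmul_eq_mul]

end Lagrange

open Polynomial in
theorem Qiter_eq_iterate_derivative_div (W : ℝ[X]) {f : ℝ → ℝ}
    (hf : ∀ q, W.eval q ≠ 0 → f q = (derivative W).eval q / W.eval q) (s : ℕ) {q : ℝ}
    (hq : W.eval q ≠ 0) :
    Qiter f s q = (derivative^[s] W).eval q / W.eval q := by
  -- `(∂ + W'/W) (P / W) = P' / W`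
  induction s generalizing q with
  | zero => simp [Qiter, div_self hq]
  | succ s ih =>
    have hlocal : Qiter f s =ᶠ[nhds q] fun x => (derivative^[s] W).eval x / W.eval x :=
      (W.continuousAt.eventually_ne hq).mono fun x hx => ih hx
    have hderiv : deriv (fun x => (derivative^[s] W).eval x / W.eval x) q =
        ((derivative^[s + 1] W).eval q * W.eval q - (derivative^[s] W).eval q *
          (derivative W).eval q) / W.eval q ^ 2 := by
      rw [Function.iterate_succ_apply']
      exact ((Polynomial.hasDerivAt _ q).div (Polynomial.hasDerivAt W q) hq).deriv
    simp only [Qiter]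
    rw [hlocal.deriv_eq, hderiv, ih hq, hf q hq]
    field_simp
    ring

namespace MvPolynomial

open scoped Polynomial

variable {σ R : Type*} [CommSemiring R] [DecidableEq σ] (z : σ → R) (i : σ)

noncomputable def specializeExcept : MvPolynomial σ R →ₐ[R] R[X] :=
  aeval (Function.update (fun j => Polynomial.C (z j)) i Polynomial.X)

theorem specializeExcept_X (j : σ) :
    specializeExcept z i (X j) = Function.update (fun j => Polynomial.C (z j)) i Polynomial.X j :=
  aeval_X _ _

theorem eval_specializeExcept (P : MvPolynomial σ R) :
    (specializeExcept z i P).eval (z i) = eval z P := by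
  induction P using MvPolynomial.induction_on with
  | C a => simp [specializeExcept]
  | add P Q hP hQ => simp [hP, hQ]
  | mul_X P j hP =>
    rw [map_mul, Polynomial.eval_mul, hP, specializeExcept_X, map_mul, eval_X]
    rcases eq_or_ne j i with rfl | hj <;> simp [*]

theorem specializeExcept_pderiv (P : MvPolynomial σ R) :
    specializeExcept z i (pderiv i P) = Polynomial.derivative (specializeExcept z i P) := by
  induction P using MvPolynomial.induction_on with
  | C a => simp [specializeExcept]
  | add P Q hP hQ => simp [hP, hQ]
  | mul_X P j hP =>
    rw [pderiv_mul, map_add, map_mul, map_mul, hP, pderiv_X, map_mul, Polynomial.derivative_mul,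
      specializeExcept_X]
    rcases eq_or_ne j i with rfl | hj
    · simp [specializeExcept]
    · simp [hj]

theorem specializeExcept_iterate_pderiv (n : ℕ) (P : MvPolynomial σ R) :
    specializeExcept z i ((pderiv i)^[n] P) =
      Polynomial.derivative^[n] (specializeExcept z i P) := by
  induction n generalizing P with
  | zero => rfl
  | succ n ih => rw [Function.iterate_succ_apply, Function.iterate_succ_apply, ih,
      specializeExcept_pderiv]

end MvPolynomial

open Polynomial Finset in
theorem associated_nodal_specializeExcept_vandPoly {N : ℕ} {z : Fin N → ℝ}
    (hz : Function.Injective z) (i : Fin N) :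
    Associated (Lagrange.nodal (univ.erase i) z) (specializeExcept z i (vandPoly N)) := by
  -- `X a - X b` specialises to a nonzero constant unless `i ∈ {a, b}`, and then to `±(X - z_j)`
  set Y : Fin N → ℝ[X] := fun j => Polynomial.X - Polynomial.C (z j)
  have hfactor : ∀ a b, a < b →
      Associated ((if a = i then Y b else 1) * (if b = i then Y a else 1))
        (specializeExcept z i (MvPolynomial.X a - MvPolynomial.X b)) := by
    intro a b hab
    rw [map_sub, specializeExcept_X, specializeExcept_X]
    rcases eq_or_ne a i with rfl | ha
    · simp [Y, hab.ne']
    rcases eq_or_ne b i with rfl | hb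
    · simpa [Y, ha] using (Associated.refl (Y a)).neg_right
    · simpa [ha, hb] using (associated_one_iff_isUnit.mpr (Polynomial.isUnit_C.mpr
        (sub_ne_zero.mpr (hz.ne hab.ne)).isUnit)).symm
  have hprod : ∏ a, ∏ b ∈ univ.filter (a < ·),
      ((if a = i then Y b else 1) * (if b = i then Y a else 1)) =
        Lagrange.nodal (univ.erase i) z := by
    simp only [prod_mul_distrib, prod_ite_irrel, prod_const_one, prod_ite_eq', mem_filter,
      mem_univ, true_and, if_true]
    rw [← prod_filter, Lagrange.nodal, ← prod_filter_mul_prod_filter_not (univ.erase i) (i < ·)]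
    congr 2 <;> ext j <;> simp <;> omega
  rw [← hprod, vandPoly, map_prod]
  refine Associated.prod _ _ _ fun a _ => ?_
  rw [map_prod]
  exact Associated.prod _ _ _ fun b hb => hfactor a b (mem_filter.mp hb).2

open Polynomial Finset in
theorem eval_iterate_pderiv_vandPoly_div_eval {N : ℕ} {z : Fin N → ℝ} (hz : Function.Injective z)
    (i : Fin N) (n : ℕ) :
    eval z ((pderiv i)^[n] (vandPoly N)) / eval z (vandPoly N) =
      (derivative^[n] (Lagrange.nodal (univ.erase i) z)).eval (z i) /
        (Lagrange.nodal (univ.erase i) z).eval (z i) := by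
  rw [← eval_specializeExcept z i, ← eval_specializeExcept z i, specializeExcept_iterate_pderiv]
  exact (associated_nodal_specializeExcept_vandPoly hz i).eval_iterate_derivative_div_eval n (z i)

open Polynomial Finset in
theorem itoyama_matsuo_formula_general (N n : ℕ)
    (z : Fin N → ℝ) (hz : Function.Injective z) (p : ℝ) (hp : ∀ i, p ≠ z i) :
    (eval z (vandPoly N))⁻¹ *
        ∑ i : Fin N, (1 / (p - z i)) * eval z ((pderiv i)^[n] (vandPoly N)) =
      (1 / (n + 1 : ℝ)) * Qiter (fun q => ∑ i : Fin N, 1 / (q - z i)) (n + 1) p := by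
  set W := Lagrange.nodal univ z
  have hWp : W.eval p ≠ 0 := Lagrange.eval_nodal_not_at_node fun i _ => hp i
  have hlogderiv : ∀ q, W.eval q ≠ 0 → ∑ i, 1 / (q - z i) = (derivative W).eval q / W.eval q :=
    fun q hq => (Lagrange.eval_derivative_nodal_div_eval_nodal hq).symm
  have hdeg : (derivative^[n + 1] W).degree < #(univ : Finset (Fin N)) := by
    rw [← Lagrange.degree_nodal (v := z), Function.iterate_succ_apply]
    exact (degree_iterate_derivative_le _ n).trans_lt
      (degree_derivative_lt (Lagrange.nodal_ne_zero (R := ℝ)))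
  rw [Qiter_eq_iterate_derivative_div W hlogderiv (n + 1) hWp,
    Lagrange.eval_div_eval_nodal hz.injOn hdeg (fun i _ => hp i), mul_sum, mul_sum]
  refine sum_congr rfl fun i _ => ?_
  rw [Lagrange.eval_iterate_derivative_nodal_at_node (mem_univ i),
    Lagrange.eval_nodal_derivative_eval_node_eq (mem_univ i), mul_div_assoc,
    ← eval_iterate_pderiv_vandPoly_div_eval hz i n]
  field_simp

/-- `Δ⁻¹ ∑_i (1/(p - z_i)) ∂ⁿΔ/∂z_iⁿ = (1/(n+1)) (∂/∂p + ∑_i 1/(p - z_i))^{n+1} · 1`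
for `1 ≤ n < N`, pairwise distinct `z_i`, and `p` distinct from all `z_i`. -/
theorem itoyama_matsuo_formula (N n : ℕ) (hn : 1 ≤ n) (hnN : n < N)
    (z : Fin N → ℝ) (hz : Function.Injective z) (p : ℝ) (hp : ∀ i, p ≠ z i) :
    (eval z (vandPoly N))⁻¹ *
        ∑ i : Fin N, (1 / (p - z i)) * eval z ((pderiv i)^[n] (vandPoly N)) =
      (1 / (n + 1 : ℝ)) * Qiter (fun q => ∑ i : Fin N, 1 / (q - z i)) (n + 1) p :=
  itoyama_matsuo_formula_general N n z hz p hp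
end

section
/- The Virasoro operators L̂_n = ∑_{k≥1} k t_k ∂/∂t_{k+n} + ∑_{k=0}^n ∂²/(∂t_k ∂t_{n-k}) for n ≥ -1 satisfy the commutation relations [L̂_n, L̂_m] = (n - m) L̂_{n+m} for all n, m ≥ -1, as operators on the polynomial ring ℝ[t_0, t_1, t_2, ...]. -/
open MvPolynomial

/-- The Virasoro operator `L̂_n = ∑_{k≥1} k t_k ∂/∂t_{k+n} + ∑_{k=0}^n ∂/∂t_k ∂/∂t_{n-k}`
acting on polynomials in the variables `t_0, t_1, t_2, ...` (for `n ≥ -1`; on any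
given polynomial only finitely many terms of the first sum are nonzero). -/
noncomputable def Lop (n : ℤ) (P : MvPolynomial ℕ ℝ) : MvPolynomial ℕ ℝ :=
  (∑ᶠ k : ℕ, if 1 ≤ k then (k : ℝ) • (X k * pderiv (((k : ℤ) + n).toNat) P) else 0) +
    ∑ k ∈ Finset.range ((n + 1).toNat), pderiv k (pderiv (n.toNat - k) P)

namespace VirAux

lemma pd_single (i j k : ℕ) :
    pderiv i ((Pi.single j 1 : ℕ → MvPolynomial ℕ ℝ) k) = 0 := by
  rcases eq_or_ne k j with rfl | h
  · simp
  · simp [Pi.single_apply, h]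

/-- Partial derivatives commute. -/
lemma pd_comm (i j : ℕ) (P : MvPolynomial ℕ ℝ) :
    pderiv i (pderiv j P) = pderiv j (pderiv i P) := by
  induction P using MvPolynomial.induction_on with
  | C a => simp
  | add p q hp hq => simp [hp, hq]
  | mul_X p k hp =>
      simp only [pderiv_mul, map_add, pderiv_X, pd_single, mul_zero, add_zero, hp]
      ring

lemma pd3 (i j k : ℕ) (P : MvPolynomial ℕ ℝ) :
    pderiv i (pderiv j (pderiv k P)) = pderiv j (pderiv k (pderiv i P)) := by
  rw [pd_comm i j, pd_comm i k]

end VirAux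

namespace VirAux2
open VirAux

noncomputable def Af (a M : ℕ) (P : MvPolynomial ℕ ℝ) : MvPolynomial ℕ ℝ :=
  ∑ k ∈ Finset.range M, (k : ℝ) • (X k * pderiv (k + a - 1) P)

noncomputable def Bf (a : ℕ) (P : MvPolynomial ℕ ℝ) : MvPolynomial ℕ ℝ :=
  ∑ k ∈ Finset.range a, pderiv k (pderiv (a - 1 - k) P)

lemma Af_add (a M : ℕ) (P Q : MvPolynomial ℕ ℝ) :
    Af a M (P + Q) = Af a M P + Af a M Q := by
  unfold Af
  rw [← Finset.sum_add_distrib]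
  exact Finset.sum_congr rfl fun k _ => by rw [map_add, mul_add, smul_add]

lemma Bf_add (a : ℕ) (P Q : MvPolynomial ℕ ℝ) :
    Bf a (P + Q) = Bf a P + Bf a Q := by
  unfold Bf
  rw [← Finset.sum_add_distrib]
  exact Finset.sum_congr rfl fun k _ => by rw [map_add, map_add]

lemma Af_ext (a M₁ M₂ : ℕ) (P : MvPolynomial ℕ ℝ) (h : M₁ ≤ M₂)
    (hv : ∀ k, M₁ ≤ k → pderiv (k + a - 1) P = 0) :
    Af a M₂ P = Af a M₁ P := by
  unfold Af
  refine (Finset.sum_subset (Finset.range_subset_range.2 h) ?_).symm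
  intro k _ hk
  rw [hv k (by simpa using hk)]
  simp

/-- Formula for a partial derivative of `Af`. -/
lemma pd_Af (b M : ℕ) (P : MvPolynomial ℕ ℝ) (i : ℕ) :
    pderiv i (Af b M P)
      = (if i < M then (i : ℝ) • pderiv (i + b - 1) P else 0)
        + ∑ l ∈ Finset.range M, (l : ℝ) • (X l * pderiv i (pderiv (l + b - 1) P)) := by
  unfold Af
  rw [map_sum]
  have step : ∀ l ∈ Finset.range M,
      pderiv i ((l : ℝ) • (X l * pderiv (l + b - 1) P))
        = (if i = l then (l : ℝ) • pderiv (l + b - 1) P else 0)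
          + (l : ℝ) • (X l * pderiv i (pderiv (l + b - 1) P)) := by
    intro l _
    rw [Derivation.map_smul, pderiv_mul]
    by_cases h : i = l
    · subst h
      rw [if_pos rfl, pderiv_X_self, one_mul, smul_add]
    · rw [if_neg h, pderiv_X_of_ne (Ne.symm h), zero_mul, zero_add, zero_add]
  rw [Finset.sum_congr rfl step, Finset.sum_add_distrib, Finset.sum_ite_eq]
  simp [Finset.mem_range]

/-- Derivatives of high index kill `Af b M P + Bf b P`. -/
lemma pd_LopN (b M N : ℕ) (P : MvPolynomial ℕ ℝ)
    (hN : ∀ i, N ≤ i → pderiv i P = 0) :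
    ∀ j, N + 1 ≤ j → pderiv j (Af b M P + Bf b P) = 0 := by
  intro j hj
  rw [map_add, pd_Af]
  have h1 : (if j < M then (j : ℝ) • pderiv (j + b - 1) P else 0) = 0 := by
    split_ifs
    · rw [hN (j + b - 1) (by omega), smul_zero]
    · rfl
  have h2 : (∑ l ∈ Finset.range M, (l : ℝ) • (X l * pderiv j (pderiv (l + b - 1) P))) = 0 :=
    Finset.sum_eq_zero fun l _ => by
      rw [pd_comm, hN j (by omega), map_zero, mul_zero, smul_zero]
  have h3 : pderiv j (Bf b P) = 0 := by
    unfold Bf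
    rw [map_sum]
    exact Finset.sum_eq_zero fun k _ => by
      rw [pd3, hN j (by omega), map_zero, map_zero]
  rw [h1, h2, h3, zero_add, zero_add]

/-- Bridge between `Lop` and the finitary operators. -/
lemma Lop_eq (n : ℤ) (hn : -1 ≤ n) (P : MvPolynomial ℕ ℝ) (N : ℕ)
    (hN : ∀ i, N ≤ i → pderiv i P = 0) :
    Lop n P = Af (n + 1).toNat (N + 2) P + Bf (n + 1).toNat P := by
  unfold Lop Af Bf
  congr 1
  · rw [finsum_eq_sum_of_support_subset _
      (s := Finset.range (N + 2)) ?_]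
    · refine Finset.sum_congr rfl fun k _ => ?_
      by_cases h1 : 1 ≤ k
      · rw [if_pos h1]
        have h2 : ((k : ℤ) + n).toNat = k + (n + 1).toNat - 1 := by omega
        rw [h2]
      · have : k = 0 := by omega
        subst this
        simp
    · intro k hk
      simp only [Finset.coe_range, Set.mem_Iio]
      by_contra h
      push_neg at h
      have h1 : (1:ℕ) ≤ k := by omega
      have h2 : pderiv (((k : ℤ) + n).toNat) P = 0 := hN _ (by omega)
      simp only [Function.mem_support, if_pos h1, h2, mul_zero, smul_zero,
        ne_eq, not_true_eq_false] at hk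
  · refine Finset.sum_congr rfl fun k hk => ?_
    simp only [Finset.mem_range] at hk
    have h2 : n.toNat - k = (n + 1).toNat - 1 - k := by omega
    rw [h2]


lemma shiftS (f : ℕ → MvPolynomial ℕ ℝ) (b : ℕ) :
    ∀ a : ℕ, 1 ≤ a + b →
      ∑ j ∈ Finset.range a, (j : ℝ) • f (j + b - 1)
        = ∑ i ∈ Finset.range (a + b - 1),
            (if b ≤ i then ((i : ℝ) + 1 - b) else 0) • f i := by
  intro a
  induction a with
  | zero =>
      intro hab
      rw [Finset.sum_range_zero]
      refine (Finset.sum_eq_zero fun i hi => ?_).symm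
      simp only [Finset.mem_range] at hi
      rw [if_neg (by omega), zero_smul]
  | succ a ih =>
      intro hab
      by_cases hb : 1 ≤ b
      · rw [Finset.sum_range_succ, ih (by omega),
          show a + 1 + b - 1 = (a + b - 1) + 1 from by omega, Finset.sum_range_succ]
        congr 1
        by_cases ha : a = 0
        · subst ha
          rw [if_neg (by omega)]
          simp
        · rw [if_pos (by omega)]
          congr 1
          rw [Nat.cast_sub (by omega : 1 ≤ a + b)]
          push_cast
          ring
      · have hb0 : b = 0 := by omega
        subst hb0
        rw [Finset.sum_range_succ']
        simp only [Nat.cast_zero, zero_smul, add_zero]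
        rw [show a + 1 + 0 - 1 = a from by omega]
        refine Finset.sum_congr rfl fun i _ => ?_
        rw [if_pos (by omega), show i + 1 + 0 - 1 = i from by omega]
        congr 1
        push_cast
        ring

lemma sym_sum (c : ℕ) (E : ℕ → MvPolynomial ℕ ℝ)
    (hsym : ∀ i < c, E (c - 1 - i) = E i) (h : ℕ → ℝ) :
    ∑ i ∈ Finset.range c, h i • E i = ∑ i ∈ Finset.range c, h (c - 1 - i) • E i := by
  rw [← Finset.sum_range_reflect]
  refine Finset.sum_congr rfl fun i hi => ?_
  simp only [Finset.mem_range] at hi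
  rw [hsym i hi]

lemma keyBB_abstract (c : ℕ) (E : ℕ → MvPolynomial ℕ ℝ)
    (hsym : ∀ i < c, E (c - 1 - i) = E i) (h₁ h₂ : ℕ → ℝ) (r : ℝ)
    (hcoeff : ∀ i < c, (h₁ i - h₂ i) + (h₁ (c - 1 - i) - h₂ (c - 1 - i)) = r) :
    (2 : ℝ) • (∑ i ∈ Finset.range c, h₁ i • E i)
      - (2 : ℝ) • (∑ i ∈ Finset.range c, h₂ i • E i)
      = r • ∑ i ∈ Finset.range c, E i := by
  have h12 : (∑ i ∈ Finset.range c, h₁ i • E i) - (∑ i ∈ Finset.range c, h₂ i • E i)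
      = ∑ i ∈ Finset.range c, (h₁ i - h₂ i) • E i := by
    rw [← Finset.sum_sub_distrib]
    exact Finset.sum_congr rfl fun i _ => (sub_smul _ _ _).symm
  calc (2 : ℝ) • (∑ i ∈ Finset.range c, h₁ i • E i)
        - (2 : ℝ) • (∑ i ∈ Finset.range c, h₂ i • E i)
      = ((∑ i ∈ Finset.range c, h₁ i • E i) - (∑ i ∈ Finset.range c, h₂ i • E i))
        + ((∑ i ∈ Finset.range c, h₁ i • E i) - (∑ i ∈ Finset.range c, h₂ i • E i)) := by
        rw [two_smul ℝ, two_smul ℝ]; abel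
    _ = (∑ i ∈ Finset.range c, (h₁ i - h₂ i) • E i)
        + ∑ i ∈ Finset.range c, (fun i => h₁ i - h₂ i) (c - 1 - i) • E i := by
        rw [h12]
        congr 1
        exact sym_sum c E hsym (fun i => h₁ i - h₂ i)
    _ = ∑ i ∈ Finset.range c, ((h₁ i - h₂ i) + (h₁ (c - 1 - i) - h₂ (c - 1 - i))) • E i := by
        rw [← Finset.sum_add_distrib]
        exact Finset.sum_congr rfl fun i _ => (add_smul _ _ _).symm
    _ = ∑ i ∈ Finset.range c, r • E i := by
        refine Finset.sum_congr rfl fun i hi => ?_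
        simp only [Finset.mem_range] at hi
        rw [hcoeff i hi]
    _ = r • ∑ i ∈ Finset.range c, E i := (Finset.smul_sum).symm

lemma keyBB (a b : ℕ) (P : MvPolynomial ℕ ℝ) (hab : 1 ≤ a + b) :
    (2 : ℝ) • (∑ j ∈ Finset.range a, (j : ℝ) • pderiv (a - 1 - j) (pderiv (j + b - 1) P))
      - (2 : ℝ) • (∑ j ∈ Finset.range b, (j : ℝ) • pderiv (b - 1 - j) (pderiv (j + a - 1) P))
      = ((a : ℝ) - (b : ℝ)) • Bf (a + b - 1) P := by
  set c := a + b - 1 with hc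
  have conv1 : (∑ j ∈ Finset.range a, (j : ℝ) • pderiv (a - 1 - j) (pderiv (j + b - 1) P))
      = ∑ i ∈ Finset.range c,
          (if b ≤ i then ((i : ℝ) + 1 - b) else 0) • pderiv (c - 1 - i) (pderiv i P) := by
    rw [← shiftS (fun i => pderiv (c - 1 - i) (pderiv i P)) b a hab]
    refine Finset.sum_congr rfl fun j hj => ?_
    simp only [Finset.mem_range] at hj
    rcases Nat.eq_zero_or_pos j with rfl | hj1
    · simp
    · have h : a - 1 - j = c - 1 - (j + b - 1) := by omega
      rw [h]
  have conv2 : (∑ j ∈ Finset.range b, (j : ℝ) • pderiv (b - 1 - j) (pderiv (j + a - 1) P))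
      = ∑ i ∈ Finset.range c,
          (if a ≤ i then ((i : ℝ) + 1 - a) else 0) • pderiv (c - 1 - i) (pderiv i P) := by
    rw [show Finset.range c = Finset.range (b + a - 1) from by rw [show c = b + a - 1 from by omega]]
    rw [← shiftS (fun i => pderiv (c - 1 - i) (pderiv i P)) a b (by omega)]
    refine Finset.sum_congr rfl fun j hj => ?_
    simp only [Finset.mem_range] at hj
    rcases Nat.eq_zero_or_pos j with rfl | hj1
    · simp
    · have h : b - 1 - j = c - 1 - (j + a - 1) := by omega
      rw [h]
  have convB : Bf c P = ∑ i ∈ Finset.range c, pderiv (c - 1 - i) (pderiv i P) := by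
    unfold Bf
    exact Finset.sum_congr rfl fun i _ => pd_comm _ _ _
  rw [conv1, conv2, convB]
  refine keyBB_abstract c (fun i => pderiv (c - 1 - i) (pderiv i P)) ?_ _ _ _ ?_
  · intro i hi
    rw [show c - 1 - (c - 1 - i) = i from by omega, pd_comm]
  · intro i hi
    have hij : i + (c - 1 - i) + 2 = a + b := by omega
    set j := c - 1 - i with hjdef
    have hz : (((if b ≤ i then (i : ℤ) + 1 - (b : ℤ) else 0)
          - (if a ≤ i then (i : ℤ) + 1 - (a : ℤ) else 0))
        + ((if b ≤ j then (j : ℤ) + 1 - (b : ℤ) else 0)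
          - (if a ≤ j then (j : ℤ) + 1 - (a : ℤ) else 0))) = (a : ℤ) - (b : ℤ) := by
      split_ifs <;> omega
    have hr := congrArg (fun z : ℤ => (z : ℝ)) hz
    push_cast [apply_ite (fun z : ℤ => (z : ℝ))] at hr
    exact hr


lemma keyAA (a b N M : ℕ) (P : MvPolynomial ℕ ℝ)
    (hN : ∀ i, N ≤ i → pderiv i P = 0) (hM : N + 2 ≤ M) (hab : 1 ≤ a + b) :
    Af a M (Af b M P) - Af b M (Af a M P) = ((a : ℝ) - (b : ℝ)) • Af (a + b - 1) M P := by
  have expand : ∀ u v : ℕ, Af u M (Af v M P)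
      = (∑ k ∈ Finset.range M, (k : ℝ) • (X k *
            (if k + u - 1 < M then ((k + u - 1 : ℕ) : ℝ) • pderiv ((k + u - 1) + v - 1) P else 0)))
        + ∑ k ∈ Finset.range M, ∑ l ∈ Finset.range M,
            (k : ℝ) • (X k * ((l : ℝ) • (X l * pderiv (k + u - 1) (pderiv (l + v - 1) P)))) := by
    intro u v
    calc Af u M (Af v M P)
        = ∑ k ∈ Finset.range M, (k : ℝ) • (X k * pderiv (k + u - 1) (Af v M P)) := rfl
      _ = ∑ k ∈ Finset.range M, ((k : ℝ) • (X k *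
            (if k + u - 1 < M then ((k + u - 1 : ℕ) : ℝ) • pderiv ((k + u - 1) + v - 1) P else 0))
          + ∑ l ∈ Finset.range M,
            (k : ℝ) • (X k * ((l : ℝ) • (X l * pderiv (k + u - 1) (pderiv (l + v - 1) P))))) := by
          refine Finset.sum_congr rfl fun k _ => ?_
          rw [pd_Af, mul_add, smul_add, Finset.mul_sum, Finset.smul_sum]
      _ = _ := Finset.sum_add_distrib
  rw [expand a b, expand b a]
  have hsym : (∑ k ∈ Finset.range M, ∑ l ∈ Finset.range M,
        (k : ℝ) • (X k * ((l : ℝ) • (X l * pderiv (k + a - 1) (pderiv (l + b - 1) P)))))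
      = ∑ k ∈ Finset.range M, ∑ l ∈ Finset.range M,
        (k : ℝ) • (X k * ((l : ℝ) • (X l * pderiv (k + b - 1) (pderiv (l + a - 1) P)))) := by
    rw [Finset.sum_comm]
    refine Finset.sum_congr rfl fun k _ => Finset.sum_congr rfl fun l _ => ?_
    rw [pd_comm]
    simp only [smul_eq_C_mul]
    ring
  rw [hsym, add_sub_add_right_eq_sub]
  calc _ = ∑ k ∈ Finset.range M,
        ((k : ℝ) • (X k *
            (if k + a - 1 < M then ((k + a - 1 : ℕ) : ℝ) • pderiv (k + (a + b - 1) - 1) P else 0))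
        - (k : ℝ) • (X k *
            (if k + b - 1 < M then ((k + b - 1 : ℕ) : ℝ) • pderiv (k + (a + b - 1) - 1) P else 0))) := by
        rw [← Finset.sum_sub_distrib]
        refine Finset.sum_congr rfl fun k _ => ?_
        rcases Nat.eq_zero_or_pos k with rfl | hk1
        · simp
        · rw [show (k + a - 1) + b - 1 = k + (a + b - 1) - 1 from by omega,
            show (k + b - 1) + a - 1 = k + (a + b - 1) - 1 from by omega]
    _ = ((a : ℝ) - (b : ℝ)) • Af (a + b - 1) M P := by
        unfold Af
        rw [Finset.smul_sum]
        refine Finset.sum_congr rfl fun k hk => ?_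
        rcases Nat.eq_zero_or_pos k with rfl | hk1
        · simp
        · by_cases hka : k + a - 1 < M
          · by_cases hkb : k + b - 1 < M
            · rw [if_pos hka, if_pos hkb]
              have ea : ((k + a - 1 : ℕ) : ℝ) = (k : ℝ) + a - 1 := by
                rw [Nat.cast_sub (by omega : 1 ≤ k + a)]
                push_cast
                ring
              have eb : ((k + b - 1 : ℕ) : ℝ) = (k : ℝ) + b - 1 := by
                rw [Nat.cast_sub (by omega : 1 ≤ k + b)]
                push_cast
                ring
              rw [ea, eb, mul_smul_comm, mul_smul_comm, smul_smul, smul_smul, smul_smul, ← sub_smul]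
              congr 1
              ring
            · have hT : pderiv (k + (a + b - 1) - 1) P = 0 := hN _ (by omega)
              simp [hT]
          · have hT : pderiv (k + (a + b - 1) - 1) P = 0 := hN _ (by omega)
            simp [hT]

lemma keyAB (a b N M : ℕ) (P : MvPolynomial ℕ ℝ)
    (hN : ∀ i, N ≤ i → pderiv i P = 0) (hM : N + 2 ≤ M) :
    Bf a (Af b M P) - Af b M (Bf a P)
      = (2 : ℝ) • ∑ j ∈ Finset.range a, (j : ℝ) • pderiv (a - 1 - j) (pderiv (j + b - 1) P) := by
  have expand_j : ∀ j ∈ Finset.range a, pderiv j (pderiv (a - 1 - j) (Af b M P)) =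
      (if a - 1 - j < M then ((a - 1 - j : ℕ) : ℝ) • pderiv j (pderiv ((a - 1 - j) + b - 1) P) else 0)
      + ((if j < M then (j : ℝ) • pderiv (a - 1 - j) (pderiv (j + b - 1) P) else 0)
      + ∑ l ∈ Finset.range M,
          (l : ℝ) • (X l * pderiv j (pderiv (a - 1 - j) (pderiv (l + b - 1) P)))) := by
    intro j _
    rw [pd_Af, map_add]
    congr 1
    · split_ifs with h
      · rw [Derivation.map_smul]
      · rw [map_zero]
    · rw [map_sum]
      have step2 : ∀ l ∈ Finset.range M,
          pderiv j ((l : ℝ) • (X l * pderiv (a - 1 - j) (pderiv (l + b - 1) P)))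
            = (if j = l then (l : ℝ) • pderiv (a - 1 - j) (pderiv (l + b - 1) P) else 0)
              + (l : ℝ) • (X l * pderiv j (pderiv (a - 1 - j) (pderiv (l + b - 1) P))) := by
        intro l _
        rw [Derivation.map_smul, pderiv_mul]
        by_cases h : j = l
        · subst h
          rw [if_pos rfl, pderiv_X_self, one_mul, smul_add]
        · rw [if_neg h, pderiv_X_of_ne (Ne.symm h), zero_mul, zero_add, zero_add]
      rw [Finset.sum_congr rfl step2, Finset.sum_add_distrib, Finset.sum_ite_eq]
      simp [Finset.mem_range]
  have hBA : Bf a (Af b M P)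
      = (∑ j ∈ Finset.range a,
          (if a - 1 - j < M then ((a - 1 - j : ℕ) : ℝ) • pderiv j (pderiv ((a - 1 - j) + b - 1) P) else 0))
        + ((∑ j ∈ Finset.range a,
            (if j < M then (j : ℝ) • pderiv (a - 1 - j) (pderiv (j + b - 1) P) else 0))
        + ∑ j ∈ Finset.range a, ∑ l ∈ Finset.range M,
            (l : ℝ) • (X l * pderiv j (pderiv (a - 1 - j) (pderiv (l + b - 1) P)))) := by
    unfold Bf
    rw [Finset.sum_congr rfl expand_j, Finset.sum_add_distrib, Finset.sum_add_distrib]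
  have hAB : Af b M (Bf a P)
      = ∑ j ∈ Finset.range a, ∑ l ∈ Finset.range M,
          (l : ℝ) • (X l * pderiv j (pderiv (a - 1 - j) (pderiv (l + b - 1) P))) := by
    calc Af b M (Bf a P)
        = ∑ l ∈ Finset.range M, (l : ℝ) • (X l * pderiv (l + b - 1) (Bf a P)) := rfl
      _ = ∑ l ∈ Finset.range M, ∑ j ∈ Finset.range a,
            (l : ℝ) • (X l * pderiv (l + b - 1) (pderiv j (pderiv (a - 1 - j) P))) := by
          refine Finset.sum_congr rfl fun l _ => ?_
          unfold Bf
          rw [map_sum, Finset.mul_sum, Finset.smul_sum]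
      _ = ∑ j ∈ Finset.range a, ∑ l ∈ Finset.range M,
            (l : ℝ) • (X l * pderiv (l + b - 1) (pderiv j (pderiv (a - 1 - j) P))) :=
          Finset.sum_comm
      _ = _ := by
          refine Finset.sum_congr rfl fun j _ => Finset.sum_congr rfl fun l _ => ?_
          rw [pd3]
  have hT1 : (∑ j ∈ Finset.range a,
        (if a - 1 - j < M then ((a - 1 - j : ℕ) : ℝ) • pderiv j (pderiv ((a - 1 - j) + b - 1) P) else 0))
      = ∑ j ∈ Finset.range a, (j : ℝ) • pderiv (a - 1 - j) (pderiv (j + b - 1) P) := by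
    calc (∑ j ∈ Finset.range a,
          (if a - 1 - j < M then ((a - 1 - j : ℕ) : ℝ) • pderiv j (pderiv ((a - 1 - j) + b - 1) P) else 0))
        = ∑ j ∈ Finset.range a,
            ((a - 1 - j : ℕ) : ℝ) • pderiv j (pderiv ((a - 1 - j) + b - 1) P) := by
          refine Finset.sum_congr rfl fun j _ => ?_
          by_cases h : a - 1 - j < M
          · rw [if_pos h]
          · rw [if_neg h, hN ((a - 1 - j) + b - 1) (by omega), map_zero, smul_zero]
      _ = _ := by
          rw [← Finset.sum_range_reflect]
          refine Finset.sum_congr rfl fun j hj => ?_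
          simp only [Finset.mem_range] at hj
          rw [show a - 1 - (a - 1 - j) = j from by omega]
  have hT2 : (∑ j ∈ Finset.range a,
        (if j < M then (j : ℝ) • pderiv (a - 1 - j) (pderiv (j + b - 1) P) else 0))
      = ∑ j ∈ Finset.range a, (j : ℝ) • pderiv (a - 1 - j) (pderiv (j + b - 1) P) := by
    refine Finset.sum_congr rfl fun j _ => ?_
    by_cases h : j < M
    · rw [if_pos h]
    · rw [if_neg h, hN (j + b - 1) (by omega), map_zero, smul_zero]
  rw [hBA, hAB, hT1, hT2, two_smul]
  abel

lemma keyC (a b : ℕ) (P : MvPolynomial ℕ ℝ) :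
    Bf a (Bf b P) = Bf b (Bf a P) := by
  calc Bf a (Bf b P)
      = ∑ j ∈ Finset.range a, ∑ k ∈ Finset.range b,
          pderiv j (pderiv (a - 1 - j) (pderiv k (pderiv (b - 1 - k) P))) := by
        unfold Bf
        refine Finset.sum_congr rfl fun j _ => ?_
        rw [map_sum, map_sum]
    _ = ∑ k ∈ Finset.range b, ∑ j ∈ Finset.range a,
          pderiv j (pderiv (a - 1 - j) (pderiv k (pderiv (b - 1 - k) P))) := Finset.sum_comm
    _ = Bf b (Bf a P) := by
        unfold Bf
        refine Finset.sum_congr rfl fun k _ => ?_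
        rw [map_sum, map_sum]
        refine Finset.sum_congr rfl fun j _ => ?_
        calc pderiv j (pderiv (a - 1 - j) (pderiv k (pderiv (b - 1 - k) P)))
            = pderiv j (pderiv k (pderiv (a - 1 - j) (pderiv (b - 1 - k) P))) := by
              rw [pd_comm (a - 1 - j) k]
          _ = pderiv k (pderiv j (pderiv (a - 1 - j) (pderiv (b - 1 - k) P))) := pd_comm _ _ _
          _ = pderiv k (pderiv (b - 1 - k) (pderiv j (pderiv (a - 1 - j) P))) := by
              rw [pd3 j (a - 1 - j) (b - 1 - k), pd3 (a - 1 - j) (b - 1 - k) j]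

end VirAux2



open VirAux VirAux2

/-- the Virasoro operators satisfy
`[L̂_n, L̂_m] = (n - m) L̂_{n+m}` for all `n, m ≥ -1`. -/
theorem virasoro_commutator (n m : ℤ) (hn : -1 ≤ n) (hm : -1 ≤ m)
    (P : MvPolynomial ℕ ℝ) :
    Lop n (Lop m P) - Lop m (Lop n P) = ((n - m : ℤ) : ℝ) • Lop (n + m) P := by
  by_cases hnm : n = m
  · subst hnm
    simp
  · -- find a bound on the variables occurring in P
    obtain ⟨N, hN⟩ : ∃ N : ℕ, ∀ i, N ≤ i → pderiv i P = 0 := by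
      refine ⟨P.vars.sup id + 1, fun i hi => pderiv_eq_zero_of_notMem_vars fun hmem => ?_⟩
      have := Finset.le_sup (f := id) hmem
      simp only [id] at this
      omega
    set a := (n + 1).toNat with ha
    set b := (m + 1).toNat with hb
    set M := N + 3 with hMdef
    have hab : 1 ≤ a + b := by omega
    have h1 : Lop m P = Af b M P + Bf b P := by
      rw [Lop_eq m hm P N hN, ← hb,
        Af_ext b (N + 2) M P (by omega) (fun k hk => hN _ (by omega))]
    have h2 : Lop n P = Af a M P + Bf a P := by
      rw [Lop_eq n hn P N hN, ← ha,
        Af_ext a (N + 2) M P (by omega) (fun k hk => hN _ (by omega))]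
    have hc : Lop (n + m) P = Af (a + b - 1) M P + Bf (a + b - 1) P := by
      rw [Lop_eq (n + m) (by omega) P N hN,
        show (n + m + 1).toNat = a + b - 1 from by omega,
        Af_ext (a + b - 1) (N + 2) M P (by omega) (fun k hk => hN _ (by omega))]
    have hQm := pd_LopN b M N P hN
    have hQn := pd_LopN a M N P hN
    have h3 : Lop n (Af b M P + Bf b P)
        = Af a M (Af b M P + Bf b P) + Bf a (Af b M P + Bf b P) := by
      rw [Lop_eq n hn _ (N + 1) hQm, ← ha, show N + 1 + 2 = M from by omega]
    have h4 : Lop m (Af a M P + Bf a P)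
        = Af b M (Af a M P + Bf a P) + Bf b (Af a M P + Bf a P) := by
      rw [Lop_eq m hm _ (N + 1) hQn, ← hb, show N + 1 + 2 = M from by omega]
    rw [h1, h2, h3, h4, hc,
      show ((n - m : ℤ) : ℝ) = (a : ℝ) - (b : ℝ) from by
        rw [show (n - m : ℤ) = (a : ℤ) - (b : ℤ) from by omega]; push_cast; ring]
    simp only [Af_add, Bf_add]
    have kAA := keyAA a b N M P hN (by omega) hab
    have kAB1 := keyAB a b N M P hN (by omega)
    have kAB2 := keyAB b a N M P hN (by omega)
    have kBB := keyBB a b P hab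
    have kC := keyC a b P
    simp only [smul_eq_C_mul] at kAA kAB1 kAB2 kBB kC ⊢
    linear_combination kAA + kAB1 - kAB2 + kBB + kC
end

section
/- The β-deformed Virasoro operators 𝓛̂_n = ∑_{k≥1} k t_k ∂/∂t_{k+n} + β ∑_{k=0}^n (∂/∂t_k)(∂/∂t_{n-k}) + (1-β)(n+1) ∂/∂t_n, for n ≥ -1, satisfy [𝓛̂_n, 𝓛̂_m] = (n - m) 𝓛̂_{n+m} as operators on ℝ[t_0, t_1, ...]. -/
open MvPolynomial

/-- The β-deformed Virasoro operator
`𝓛̂_n = ∑_{k≥1} k t_k ∂/∂t_{k+n} + β ∑_{k=0}^n ∂/∂t_k ∂/∂t_{n-k} + (1-β)(n+1) ∂/∂t_n`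
acting on polynomials in `t_0, t_1, t_2, ...` (for `n ≥ -1`; for `n = -1` the second
sum is empty and the third term has coefficient `0`). -/
noncomputable def Lbeta (β : ℝ) (n : ℤ) (P : MvPolynomial ℕ ℝ) : MvPolynomial ℕ ℝ :=
  (∑ᶠ k : ℕ, if 1 ≤ k then (k : ℝ) • (X k * pderiv (((k : ℤ) + n).toNat) P) else 0) +
    β • ∑ k ∈ Finset.range ((n + 1).toNat), pderiv k (pderiv (n.toNat - k) P) +
    ((1 - β) * ((n : ℝ) + 1)) • pderiv n.toNat P

/-!
Write `𝓛̂_n = W_n + β B_n + (1 - β)(n + 1) ∂_n` with the derivation `W_n = ∑_{k ≥ 1} k t_k ∂_{k+n}`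
and the constant-coefficient operator `B_n = ∑_{k=0}^n ∂_k ∂_{n-k}`. Brackets of derivations are
derivations, so `[W_n, W_m] = (n - m) W_{n+m}` and `[W_n, ∂_j] = -j ∂_{j+n}` are checked on the
generators `t_i`. By Leibniz, `[W_n, B_m] = -2 ∑_{k ≤ m} (m - k) ∂_k ∂_{n+m-k}`, and pairing `k`
with `n + m - k` turns `[W_n, B_m] - [W_m, B_n]` into `(n - m) B_{n+m}`. Constant-coefficient
operators commute, so collecting terms gives the bracket relation. The finsum in `Lbeta` is a
finite sum on each polynomial, and there it agrees with `W_n` because both are derivations that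
agree on the variables of the polynomial.
-/

attribute [local instance] LieRing.ofAssociativeRing

namespace BetaVirasoro

open Finset

theorem pderiv_comm {R σ : Type*} [CommRing R] (i j : σ) (P : MvPolynomial σ R) :
    pderiv i (pderiv j P) = pderiv j (pderiv i P) := by
  classical
  induction P using MvPolynomial.induction_on with
  | C a => simp
  | add p q hp hq => simp only [map_add, hp, hq]
  | mul_X p k hp =>
    simp only [Derivation.leibniz, pderiv_X, map_add, smul_eq_mul, hp, Pi.single_apply]
    split_ifs <;> simp <;> ring

theorem lie_mul {A : Type*} [Ring A] (a b c : A) : ⁅a, b * c⁆ = ⁅a, b⁆ * c + b * ⁅a, c⁆ := by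
  simp only [Ring.lie_def]
  noncomm_ring

theorem sum_range_eq_sum_range_of_eq_zero {M : Type*} [AddCommMonoid M] {f : ℕ → M} {a b : ℕ}
    (ha : ∀ k ≥ a, f k = 0) (hb : ∀ k ≥ b, f k = 0) :
    ∑ k ∈ range a, f k = ∑ k ∈ range b, f k := by
  rcases le_total a b with h | h
  · exact (eventually_constant_sum ha h).symm
  · exact eventually_constant_sum hb h

theorem two_nsmul_sum_range_smul_of_reflect {S M : Type*} [Semiring S] [AddCommMonoid M]
    [Module S M] {K : ℕ} {g : ℕ → S} {F : ℕ → M} {c : S}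
    (hF : ∀ k < K, F (K - 1 - k) = F k) (hg : ∀ k < K, g k + g (K - 1 - k) = c) :
    2 • ∑ k ∈ range K, g k • F k = c • ∑ k ∈ range K, F k := by
  conv_lhs => rw [two_nsmul]; enter [2]; rw [← sum_range_reflect]
  rw [← sum_add_distrib, smul_sum]
  refine sum_congr rfl fun k hk => ?_
  have hk := mem_range.mp hk
  rw [hF k hk, ← add_smul, hg k hk]

variable (R : Type*) [CommRing R]

local notation "𝒫" => MvPolynomial ℕ R

/-- Extending `∂/∂t_j` by `0` to `j < 0` lets indices be shifted without truncation. -/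
noncomputable def pderivInt (j : ℤ) : Derivation R 𝒫 𝒫 :=
  if 0 ≤ j then pderiv j.toNat else 0

variable {R}

@[simp]
theorem pderivInt_natCast (i : ℕ) : pderivInt R i = pderiv i := by
  simp [pderivInt]

theorem pderivInt_of_neg {j : ℤ} (hj : j < 0) : pderivInt R j = 0 := by
  simp [pderivInt, not_le.mpr hj]

theorem pderivInt_X (j : ℤ) (i : ℕ) : pderivInt R j (X i : 𝒫) = if j = i then 1 else 0 := by
  rcases lt_or_ge j 0 with hj | hj
  · simp [pderivInt_of_neg hj]
    omega
  · lift j to ℕ using hj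
    simp [pderiv_X, Pi.single_apply, eq_comm]

theorem commute_pderivInt (j l : ℤ) :
    Commute (pderivInt R j : Module.End R 𝒫) (pderivInt R l : Module.End R 𝒫) := by
  rcases lt_or_ge j 0 with hj | hj
  · simp [pderivInt_of_neg hj]
  rcases lt_or_ge l 0 with hl | hl
  · simp [pderivInt_of_neg hl]
  lift j to ℕ using hj
  lift l to ℕ using hl
  exact LinearMap.ext fun P => by simpa using pderiv_comm j l P

variable (R) in
/-- `t_i ↦ (i - n) t_{i-n}` (and `0` for `i ≤ n`): the vector field `∑_{k ≥ 1} k t_k ∂/∂t_{k+n}`. -/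
noncomputable def witt (n : ℤ) : Derivation R 𝒫 𝒫 :=
  mkDerivation R fun i => (((i : ℤ) - n).toNat : R) • X ((i : ℤ) - n).toNat

theorem witt_X (n : ℤ) (i : ℕ) :
    witt R n (X i : 𝒫) = (((i : ℤ) - n).toNat : R) • X ((i : ℤ) - n).toNat :=
  mkDerivation_X _ _ _

theorem witt_witt_X (n m : ℤ) (i : ℕ) :
    witt R n (witt R m (X i : 𝒫)) =
      ((((i : ℤ) - m).toNat * ((i : ℤ) - m - n).toNat : ℕ) : R) • X ((i : ℤ) - m - n).toNat := by
  rw [witt_X, Derivation.map_smul, witt_X, smul_smul]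
  rcases le_or_gt 0 ((i : ℤ) - m) with h | h
  · rw [Int.toNat_of_nonneg h, Nat.cast_mul]
  · simp [Int.toNat_eq_zero.mpr h.le]

theorem lie_witt_witt {n m : ℤ} (hn : -1 ≤ n) (hm : -1 ≤ m) :
    ⁅witt R n, witt R m⁆ = ((n - m : ℤ) : R) • witt R (n + m) := by
  refine derivation_ext fun i => ?_
  rw [Derivation.commutator_apply, witt_witt_X, witt_witt_X, Derivation.smul_apply, witt_X,
    sub_right_comm, ← sub_sub, smul_smul, ← sub_smul]
  congr 1
  rcases le_or_gt ((i : ℤ) - n - m) 0 with h | h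
  · simp [Int.toNat_eq_zero.mpr h]
  · have key : ((i - m).toNat * (i - n - m).toNat - (i - n).toNat * (i - n - m).toNat : ℤ) =
        (n - m) * (i - n - m).toNat := by
      rw [Int.toNat_of_nonneg (by omega : 0 ≤ (i : ℤ) - m),
        Int.toNat_of_nonneg (by omega : 0 ≤ (i : ℤ) - n)]
      ring
    have := congrArg (Int.cast : ℤ → R) key
    push_cast at this ⊢
    linear_combination this

theorem lie_witt_pderivInt (n j : ℤ) :
    ⁅witt R n, pderivInt R j⁆ = -((j.toNat : R) • pderivInt R (j + n)) := by
  refine derivation_ext fun i => ?_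
  rw [Derivation.commutator_apply, pderivInt_X, witt_X, Derivation.map_smul, pderivInt_X,
    Derivation.neg_apply, Derivation.smul_apply, pderivInt_X]
  have hconst : witt R n (if j = (i : ℤ) then 1 else 0 : 𝒫) = 0 := by
    split_ifs <;> simp
  rw [hconst, zero_sub]
  congr 1
  by_cases h : j + n = i
  · rcases le_or_gt 0 j with hj | hj
    · simp [h, show ((i : ℤ) - n).toNat = j.toNat by omega, Int.toNat_of_nonneg hj]
    · simp [Int.toNat_eq_zero.mpr hj.le, show ((i : ℤ) - n).toNat = 0 by omega]
  · rw [if_neg h]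
    split_ifs with h'
    · simp [show ((i : ℤ) - n).toNat = 0 by omega]
    · simp

theorem lie_witt_pderivInt_mul (n j l : ℤ) :
    ⁅(witt R n : Module.End R 𝒫), (pderivInt R j : Module.End R 𝒫) * pderivInt R l⁆ =
      -((j.toNat : R) • ((pderivInt R (j + n) : Module.End R 𝒫) * pderivInt R l) +
        (l.toNat : R) • ((pderivInt R j : Module.End R 𝒫) * pderivInt R (l + n))) := by
  rw [lie_mul, ← Derivation.commutator_coe_linear_map, ← Derivation.commutator_coe_linear_map,
    lie_witt_pderivInt, lie_witt_pderivInt]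
  refine LinearMap.ext fun P => ?_
  simp only [LinearMap.add_apply, LinearMap.neg_apply, LinearMap.smul_apply, Module.End.mul_apply,
    Derivation.coeFn_coe, Derivation.neg_apply, Derivation.smul_apply, Derivation.map_smul, map_neg]
  abel

variable (R) in
noncomputable def pderivPair (n : ℤ) : Module.End R 𝒫 :=
  ∑ k ∈ range (n + 1).toNat, (pderivInt R k : Module.End R 𝒫) * pderivInt R (n - k)

theorem lie_witt_pderivPair (n m : ℤ) :
    ⁅(witt R n : Module.End R 𝒫), pderivPair R m⁆ =
      -(2 • ∑ k ∈ range (m + 1).toNat, ((m - k).toNat : R) •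
        ((pderivInt R k : Module.End R 𝒫) * pderivInt R (n + m - k))) := by
  rw [pderivPair, lie_sum, sum_congr rfl fun (k : ℕ) _ => lie_witt_pderivInt_mul n k (m - k),
    sum_neg_distrib, sum_add_distrib, two_nsmul]
  congr 2
  · rw [← sum_range_reflect]
    refine sum_congr rfl fun k hk => ?_
    have hk : (((m + 1).toNat - 1 - k : ℕ) : ℤ) = m - k := by
      have := mem_range.mp hk
      omega
    rw [hk, sub_sub_cancel, show m - k + n = n + m - k by ring,
      (commute_pderivInt (n + m - k) k).eq]
  · refine sum_congr rfl fun k _ => ?_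
    rw [sub_add_eq_add_sub, add_comm m n]

theorem lie_witt_pderivPair_sub (n m : ℤ) :
    ⁅(witt R n : Module.End R 𝒫), pderivPair R m⁆ - ⁅(witt R m : Module.End R 𝒫), pderivPair R n⁆ =
      ((n - m : ℤ) : R) • pderivPair R (n + m) := by
  set K := (n + m + 1).toNat
  set E : ℕ → Module.End R 𝒫 := fun k => (pderivInt R k : Module.End R 𝒫) * pderivInt R (n + m - k)
  have hext (c : ℤ) : ∑ k ∈ range (c + 1).toNat, ((c - k).toNat : R) • E k =
      ∑ k ∈ range K, ((c - k).toNat : R) • E k := by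
    refine sum_range_eq_sum_range_of_eq_zero (fun k hk => ?_) (fun k hk => ?_)
    · simp [show (c - k).toNat = 0 by omega]
    · simp [E, pderivInt_of_neg (show n + m - k < 0 by omega)]
  have hsym := two_nsmul_sum_range_smul_of_reflect (K := K) (F := E)
    (g := fun k : ℕ => ((n - k).toNat : R) - (m - k).toNat) (c := ((n - m : ℤ) : R)) ?_ ?_
  · rw [lie_witt_pderivPair, lie_witt_pderivPair, add_comm m n, hext, hext, neg_sub_neg,
      ← nsmul_sub, ← sum_sub_distrib, pderivPair, ← hsym]
    simp only [sub_smul]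
  · intro k hk
    have hk : ((K - 1 - k : ℕ) : ℤ) = n + m - k := by omega
    simp only [E, hk, sub_sub_cancel]
    exact (commute_pderivInt _ _).eq
  · intro k hk
    have hk : ((K - 1 - k : ℕ) : ℤ) = n + m - k := by omega
    rw [hk]
    -- `x⁺ - (-x)⁺ = x` for `x = n - k` and for `x = k - m`
    have key : ((n - k).toNat - (m - k).toNat + ((n - (n + m - k)).toNat - (m - (n + m - k)).toNat)
        : ℤ) = n - m := by omega
    have := congrArg (Int.cast : ℤ → R) key
    push_cast at this ⊢
    exact this

theorem commute_pderivPair_pderivInt (n j : ℤ) :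
    Commute (pderivPair R n) (pderivInt R j : Module.End R 𝒫) :=
  Commute.sum_left _ _ _ fun _ _ =>
    (commute_pderivInt _ _).mul_left (commute_pderivInt _ _)

theorem commute_pderivPair (n m : ℤ) : Commute (pderivPair R n) (pderivPair R m) :=
  Commute.sum_right _ _ _ fun _ _ =>
    (commute_pderivPair_pderivInt _ _).mul_right (commute_pderivPair_pderivInt _ _)

noncomputable def virasoro (β : R) (n : ℤ) : Module.End R 𝒫 :=
  (witt R n : Module.End R 𝒫) + β • pderivPair R n +
    ((1 - β) * (n + 1)) • (pderivInt R n : Module.End R 𝒫)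

theorem lie_virasoro (β : R) {n m : ℤ} (hn : -1 ≤ n) (hm : -1 ≤ m) :
    ⁅virasoro β n, virasoro β m⁆ = ((n - m : ℤ) : R) • virasoro β (n + m) := by
  have hWW : ⁅(witt R n : Module.End R 𝒫), (witt R m : Module.End R 𝒫)⁆ =
      ((n - m : ℤ) : R) • (witt R (n + m) : Module.End R 𝒫) := by
    rw [← Derivation.commutator_coe_linear_map, lie_witt_witt hn hm,
      Derivation.coe_smul_linearMap]
  have hWD (a b : ℤ) (hb : -1 ≤ b) :
      ((b : R) + 1) • ⁅(witt R a : Module.End R 𝒫), (pderivInt R b : Module.End R 𝒫)⁆ =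
        -(((b : R) * (b + 1)) • (pderivInt R (a + b) : Module.End R 𝒫)) := by
    rw [← Derivation.commutator_coe_linear_map, lie_witt_pderivInt,
      Derivation.coe_neg_linearMap, Derivation.coe_smul_linearMap, add_comm b a, smul_neg,
      smul_smul]
    rcases hb.eq_or_lt with rfl | hb
    · simp
    · rw [← Int.cast_natCast, Int.toNat_of_nonneg (show 0 ≤ b by omega),
        mul_comm]
  have hWB := lie_witt_pderivPair_sub (R := R) n m
  have hDn := hWD n m hm
  have hDm := hWD m n hn
  rw [add_comm m n] at hDm
  simp only [Ring.lie_def] at hWW hWB hDn hDm ⊢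
  have hBB := (commute_pderivPair (R := R) n m).eq
  have hBD := (commute_pderivPair_pderivInt (R := R) n m).eq
  have hDB := (commute_pderivPair_pderivInt (R := R) m n).eq
  have hDD := (commute_pderivInt (R := R) n m).eq
  simp only [virasoro, mul_add, add_mul, smul_mul_assoc, mul_smul_comm]
  push_cast at hWW hWB ⊢
  linear_combination (norm := module) hWW + β • hWB + (1 - β) • (hDn - hDm) + (β * β) • hBB
    + (β * ((1 - β) * (m + 1))) • hBD - (β * ((1 - β) * (n + 1))) • hDB
    + (((1 - β) * (n + 1)) * ((1 - β) * (m + 1))) • hDD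

theorem witt_apply_eq_sum {n : ℤ} (hn : -1 ≤ n) {M : ℕ} {P : 𝒫} (hP : ∀ i ∈ P.vars, i < M) :
    witt R n P = ∑ k ∈ range (M + 1), (k : R) • (X k * pderiv ((k : ℤ) + n).toNat P) := by
  let V : Derivation R 𝒫 𝒫 :=
    ∑ k ∈ range (M + 1), (k : R) • (X k : 𝒫) • pderiv ((k : ℤ) + n).toNat
  have hV (Q : 𝒫) : V Q = ∑ k ∈ range (M + 1), (k : R) • (X k * pderiv ((k : ℤ) + n).toNat Q) := by
    change Derivation.coeFnAddMonoidHom V Q = _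
    simp [V, map_sum, Finset.sum_apply]
  rw [← hV]
  refine derivation_eq_of_forall_mem_vars fun i hi => ?_
  have hi := hP i hi
  rw [hV, witt_X, sum_eq_single_of_mem ((i : ℤ) - n).toNat (mem_range.mpr (by omega))]
  · rcases le_or_gt ((i : ℤ) - n) 0 with h | h
    · simp [Int.toNat_eq_zero.mpr h]
    · rw [show (((i : ℤ) - n).toNat + n).toNat = i by omega]
      simp
  · intro k _ hk
    rcases Nat.eq_zero_or_pos k with rfl | hk0
    · simp
    · simp [pderiv_X, show ((k : ℤ) + n).toNat ≠ i by omega]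

theorem finsum_eq_witt {n : ℤ} (hn : -1 ≤ n) (P : 𝒫) :
    ∑ᶠ k : ℕ, (if 1 ≤ k then (k : R) • (X k * pderiv ((k : ℤ) + n).toNat P) else 0) =
      witt R n P := by
  obtain ⟨M, hM⟩ : ∃ M, ∀ i ∈ P.vars, i < M :=
    ⟨P.vars.sup id + 1, fun i hi => Nat.lt_succ_of_le (le_sup (f := id) hi)⟩
  rw [witt_apply_eq_sum hn hM, finsum_eq_sum_of_support_subset _ (s := range (M + 1))]
  · refine sum_congr rfl fun k _ => ?_
    rcases Nat.eq_zero_or_pos k with rfl | hk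
    · simp
    · exact if_pos hk
  · intro k hk
    rw [Function.mem_support] at hk
    rw [coe_range, Set.mem_Iio]
    by_contra h
    refine hk ?_
    rw [pderiv_eq_zero_of_notMem_vars fun hmem => ?_]
    · simp
    · have := hM _ hmem
      omega

theorem Lbeta_eq_virasoro (β : ℝ) {n : ℤ} (hn : -1 ≤ n) (P : MvPolynomial ℕ ℝ) :
    Lbeta β n P = virasoro β n P := by
  have hpair : pderivPair ℝ n P =
      ∑ k ∈ range (n + 1).toNat, pderiv k (pderiv (n.toNat - k) P) := by
    simp only [pderivPair, LinearMap.sum_apply, Module.End.mul_apply]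
    refine sum_congr rfl fun k hk => ?_
    have hk := mem_range.mp hk
    rw [show n - k = ((n.toNat - k : ℕ) : ℤ) by omega]
    simp
  have hlin : ((1 - β) * ((n : ℝ) + 1)) • pderivInt ℝ n P =
      ((1 - β) * ((n : ℝ) + 1)) • pderiv n.toNat P := by
    rcases hn.eq_or_lt with rfl | hn
    · simp
    · obtain ⟨k, rfl⟩ := Int.eq_ofNat_of_zero_le (show 0 ≤ n by omega)
      simp
  rw [Lbeta, virasoro, LinearMap.add_apply, LinearMap.add_apply, LinearMap.smul_apply,
    LinearMap.smul_apply, finsum_eq_witt hn, hpair, ← hlin]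
  rfl

end BetaVirasoro

/-- the β-deformed Virasoro operators satisfy
`[𝓛̂_n, 𝓛̂_m] = (n - m) 𝓛̂_{n+m}` for all `n, m ≥ -1`. -/
theorem beta_virasoro_commutator (β : ℝ) (n m : ℤ) (hn : -1 ≤ n) (hm : -1 ≤ m)
    (P : MvPolynomial ℕ ℝ) :
    Lbeta β n (Lbeta β m P) - Lbeta β m (Lbeta β n P) =
      ((n - m : ℤ) : ℝ) • Lbeta β (n + m) P := by
  rcases eq_or_ne n m with rfl | hnm
  · simp
  have h := LinearMap.congr_fun (BetaVirasoro.lie_virasoro β hn hm) P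
  simp only [Ring.lie_def, LinearMap.sub_apply, Module.End.mul_apply, LinearMap.smul_apply] at h
  simp only [BetaVirasoro.Lbeta_eq_virasoro β hn, BetaVirasoro.Lbeta_eq_virasoro β hm,
    BetaVirasoro.Lbeta_eq_virasoro β (show -1 ≤ n + m by omega)]
  exact h
end

section
/- Let Ŵ_0 = ∑_{k≥1} k t_k L̂_k where L̂_k are the Virasoro operators, and F̂_1 = L̂_{-1} = ∑_{k≥1} k t_k ∂/∂t_{k-1}. Then F̂_2 := [½Ŵ_0, F̂_1] equals ∑_{k≥1} k t_k L̂_{k-1}. -/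
/-!
Write `L̂_n = D_n + ∑_{a+b=n} ∂_a ∂_b`, where `D_n = ∑_{k ≥ 1} k t_k ∂/∂t_{k+n}` is a derivation.
Brackets of derivations are derivations, so comparing values on the generators gives
`[D_n, D_{-1}] = (n+1) D_{n-1}` and `[∂_a, D_{-1}] = a ∂_{a-1}`; hence
`[L̂_n, L̂_{-1}] = (n+1) L̂_{n-1}` for `n ≥ 0`. As `L̂_{-1} = D_{-1}` sends `t_k` to `(k+1) t_{k+1}`,
the `k`-th term of `[Ŵ_0, F̂_1]` is `k(k+1) (t_k L̂_{k-1} - t_{k+1} L̂_k)`, and these telescope to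
`2 ∑_k k t_k L̂_{k-1}`. On a fixed polynomial every sum involved is finite, because `L̂_n P = 0`
once `n` exceeds twice the largest index of a variable of `P`.
-/

open MvPolynomial

/-- `Ŵ_0 = ∑_{k≥1} k t_k L̂_k`. -/
noncomputable def W0op (P : MvPolynomial ℕ ℝ) : MvPolynomial ℕ ℝ :=
  ∑ᶠ k : ℕ, if 1 ≤ k then (k : ℝ) • (X k * Lop k P) else 0

open Filter

theorem ite_one_le_natCast_smul {R M : Type*} [Semiring R] [AddCommMonoid M] [Module R M]
    (k : ℕ) (v : M) : (if 1 ≤ k then (k : R) • v else 0) = (k : R) • v := by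
  split_ifs with h
  · rfl
  · rw [Nat.lt_one_iff.mp (not_le.mp h), Nat.cast_zero, zero_smul]

theorem hasFiniteSupport_of_eventually_eq_zero {M : Type*} [Zero M] {f : ℕ → M}
    (h : ∀ᶠ n in atTop, f n = 0) : Function.HasFiniteSupport f := by
  rwa [← Nat.cofinite_eq_atTop] at h

theorem finsum_sub_succ {M : Type*} [AddCommGroup M] {g : ℕ → M} (hg : ∀ᶠ n in atTop, g n = 0) :
    ∑ᶠ n, (g n - g (n + 1)) = g 0 := by
  obtain ⟨N, hN⟩ := eventually_atTop.1 hg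
  have hsupp : Function.support (fun n => g n - g (n + 1)) ⊆ Finset.range N := fun n hn => by
    by_contra h
    simp only [Finset.coe_range, Set.mem_Iio, not_lt] at h
    exact hn (by simp [hN n h, hN (n + 1) (by omega)])
  rw [finsum_eq_sum_of_support_subset _ hsupp, Finset.sum_range_sub', hN N le_rfl, sub_zero]

theorem Derivation.finset_sum_apply {R A M ι : Type*} [CommSemiring R] [CommSemiring A]
    [Algebra R A] [AddCommMonoid M] [Module A M] [Module R M]
    (s : Finset ι) (D : ι → Derivation R A M) (a : A) :
    (∑ i ∈ s, D i) a = ∑ i ∈ s, D i a := by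
  simp [← Derivation.coeFnAddMonoidHom_apply, map_sum]

theorem MvPolynomial.pderiv_pderiv_comm {σ R : Type*} [CommRing R] (i j : σ)
    (P : MvPolynomial σ R) : pderiv i (pderiv j P) = pderiv j (pderiv i P) := by
  classical
  have h : ⁅pderiv i, pderiv j⁆ = (0 : Derivation R (MvPolynomial σ R) (MvPolynomial σ R)) :=
    derivation_ext fun k => by
      rw [Derivation.commutator_apply, pderiv_X, pderiv_X, Pi.single_apply, Pi.single_apply]
      split_ifs <;> simp
  simpa [Derivation.commutator_apply, sub_eq_zero] using congrArg (· P) h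

theorem MvPolynomial.finsum_derivation_apply_eq {σ R A ι : Type*} [CommSemiring R]
    [AddCommMonoid A] [Module R A] [Module (MvPolynomial σ R) A]
    (D : ι → Derivation R (MvPolynomial σ R) A) (E : Derivation R (MvPolynomial σ R) A)
    (hfin : ∀ j, Function.HasFiniteSupport fun i => D i (X j))
    (hE : ∀ j, ∑ᶠ i, D i (X j) = E (X j)) (P : MvPolynomial σ R) :
    ∑ᶠ i, D i P = E P := by
  classical
  set s := P.vars.biUnion fun j => (hfin j).toFinset
  have hsupp : ∀ j ∈ P.vars, (Function.support fun i => D i (X j)) ⊆ s := fun j hj i hi =>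
    Finset.mem_coe.2 <| Finset.mem_biUnion.2 ⟨j, hj, (Set.Finite.mem_toFinset _).2 hi⟩
  have hvanish : Function.support (fun i => D i P) ⊆ s := fun i hi => by
    by_contra his
    exact hi <| derivation_eq_zero_of_forall_mem_vars
      fun j hj => by_contra fun h => his (hsupp j hj h)
  rw [finsum_eq_sum_of_support_subset _ hvanish, ← Derivation.finset_sum_apply]
  refine derivation_eq_of_forall_mem_vars fun j hj => ?_
  rw [Derivation.finset_sum_apply, ← hE, finsum_eq_sum_of_support_subset _ (hsupp j hj)]

-- `∑_{k ≥ 1} k t_k ∂/∂t_{k+n}`, given by `t_j ↦ k t_k` with `k = j - n`; when `j ≤ n`,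
-- `Int.toNat` truncates `k` to `0` and the image vanishes.
noncomputable def LopDerivation (n : ℤ) :
    Derivation ℝ (MvPolynomial ℕ ℝ) (MvPolynomial ℕ ℝ) :=
  mkDerivation ℝ fun j => (((j : ℤ) - n).toNat : ℝ) • X ((j : ℤ) - n).toNat

theorem LopDerivation_X (n : ℤ) (j : ℕ) :
    LopDerivation n (X j) = (((j : ℤ) - n).toNat : ℝ) • X ((j : ℤ) - n).toNat :=
  mkDerivation_X _ _ _

theorem LopDerivation_neg_one_X (j : ℕ) :
    LopDerivation (-1) (X j) = ((j + 1 : ℕ) : ℝ) • X (j + 1) := by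
  rw [LopDerivation_X, show ((j : ℤ) - -1).toNat = j + 1 by omega]

theorem lie_LopDerivation_LopDerivation_neg_one (n : ℤ) :
    ⁅LopDerivation n, LopDerivation (-1)⁆ = ((n + 1 : ℤ) : ℝ) • LopDerivation (n - 1) := by
  refine derivation_ext fun j => ?_
  rw [Derivation.commutator_apply, LopDerivation_neg_one_X, Derivation.map_smul,
    LopDerivation_X n, LopDerivation_X n, Derivation.map_smul, LopDerivation_neg_one_X,
    Derivation.smul_apply, LopDerivation_X]
  rcases le_or_gt n j with h | h
  · obtain ⟨d, hd⟩ : ∃ d : ℕ, (j : ℤ) = n + d := ⟨((j : ℤ) - n).toNat, by omega⟩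
    rw [show (((j + 1 : ℕ) : ℤ) - n).toNat = d + 1 by omega,
      show ((j : ℤ) - n).toNat = d by omega, show ((j : ℤ) - (n - 1)).toNat = d + 1 by omega,
      smul_smul, smul_smul, smul_smul, ← sub_smul]
    congr 1
    have hd' : (j : ℝ) = n + d := by exact_mod_cast hd
    push_cast
    rw [hd']
    ring
  · rw [show (((j + 1 : ℕ) : ℤ) - n).toNat = 0 by omega,
      show ((j : ℤ) - n).toNat = 0 by omega, show ((j : ℤ) - (n - 1)).toNat = 0 by omega]
    simp

theorem lie_pderiv_LopDerivation_neg_one (a : ℕ) :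
    ⁅(pderiv a : Derivation ℝ (MvPolynomial ℕ ℝ) _), LopDerivation (-1)⁆ =
      (a : ℝ) • pderiv (a - 1) := by
  classical
  refine derivation_ext fun j => ?_
  rw [Derivation.commutator_apply, LopDerivation_neg_one_X, Derivation.map_smul,
    Derivation.smul_apply, pderiv_X, pderiv_X, pderiv_X]
  have hconst : LopDerivation (-1) (Pi.single (M := fun _ => MvPolynomial ℕ ℝ) a 1 j) = 0 := by
    rw [Pi.single_apply]
    split_ifs <;> simp
  rw [hconst, sub_zero]
  rcases Nat.eq_zero_or_pos a with rfl | ha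
  · simp [Pi.single_apply]
  · by_cases hj : a = j + 1
    · subst hj
      simp
    · simp [hj, show a - 1 ≠ j by omega]

theorem pderiv_LopDerivation_neg_one (a : ℕ) (Q : MvPolynomial ℕ ℝ) :
    pderiv a (LopDerivation (-1) Q) =
      LopDerivation (-1) (pderiv a Q) + (a : ℝ) • pderiv (a - 1) Q := by
  have h := congrArg (· Q) (lie_pderiv_LopDerivation_neg_one a)
  simp only [Derivation.commutator_apply, Derivation.smul_apply] at h
  rw [← h, add_sub_cancel]

theorem pderiv_pderiv_LopDerivation_neg_one (i j : ℕ) (Q : MvPolynomial ℕ ℝ) :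
    pderiv i (pderiv j (LopDerivation (-1) Q)) - LopDerivation (-1) (pderiv i (pderiv j Q)) =
      (i : ℝ) • pderiv (i - 1) (pderiv j Q) + (j : ℝ) • pderiv i (pderiv (j - 1) Q) := by
  rw [pderiv_LopDerivation_neg_one, map_add, pderiv_LopDerivation_neg_one, Derivation.map_smul]
  abel

theorem sum_pderiv_pderiv_LopDerivation_neg_one (n : ℕ) (Q : MvPolynomial ℕ ℝ) :
    ∑ k ∈ Finset.range (n + 2), pderiv k (pderiv (n + 1 - k) (LopDerivation (-1) Q)) -
        LopDerivation (-1) (∑ k ∈ Finset.range (n + 2), pderiv k (pderiv (n + 1 - k) Q)) =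
      ((n + 2 : ℕ) : ℝ) • ∑ k ∈ Finset.range (n + 1), pderiv k (pderiv (n - k) Q) := by
  have h₁ : ∑ k ∈ Finset.range (n + 2), (k : ℝ) • pderiv (k - 1) (pderiv (n + 1 - k) Q) =
      ∑ k ∈ Finset.range (n + 1), ((k + 1 : ℕ) : ℝ) • pderiv k (pderiv (n - k) Q) := by
    rw [Finset.sum_range_succ']
    simp
  have h₂ : ∑ k ∈ Finset.range (n + 2),
        ((n + 1 - k : ℕ) : ℝ) • pderiv k (pderiv (n + 1 - k - 1) Q) =
      ∑ k ∈ Finset.range (n + 1), ((n + 1 - k : ℕ) : ℝ) • pderiv k (pderiv (n - k) Q) := by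
    rw [Finset.sum_range_succ]
    simp only [Nat.sub_self, CharP.cast_eq_zero, zero_smul, add_zero]
    exact Finset.sum_congr rfl fun k _ => by rw [show n + 1 - k - 1 = n - k by omega]
  rw [map_sum, ← Finset.sum_sub_distrib]
  simp only [pderiv_pderiv_LopDerivation_neg_one, Finset.sum_add_distrib]
  rw [h₁, h₂, ← Finset.sum_add_distrib, Finset.smul_sum]
  refine Finset.sum_congr rfl fun k hk => ?_
  rw [← add_smul]
  congr 1
  have hkn : k ≤ n := Finset.mem_range_succ_iff.mp hk
  push_cast [Nat.sub_add_comm hkn, hkn]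
  ring

theorem finsum_smul_X_mul_pderiv_eq_LopDerivation {n : ℤ} (hn : -1 ≤ n)
    (P : MvPolynomial ℕ ℝ) :
    ∑ᶠ k : ℕ, (if 1 ≤ k then (k : ℝ) • (X k * pderiv ((k : ℤ) + n).toNat P) else 0) =
      LopDerivation n P := by
  classical
  let D (k : ℕ) : Derivation ℝ (MvPolynomial ℕ ℝ) (MvPolynomial ℕ ℝ) :=
    (k : ℝ) • (X k : MvPolynomial ℕ ℝ) • pderiv ((k : ℤ) + n).toNat
  have hD : ∀ k Q, D k Q = (k : ℝ) • (X k * pderiv ((k : ℤ) + n).toNat Q) := fun k Q => by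
    simp [D, smul_eq_mul]
  have hD_X : ∀ j k : ℕ, k ≠ ((j : ℤ) - n).toNat → D k (X j) = 0 := fun j k hk => by
    rw [hD, pderiv_X, Pi.single_apply]
    split_ifs with h
    · rw [show k = 0 by omega, Nat.cast_zero, zero_smul]
    · rw [mul_zero, smul_zero]
  simp_rw [ite_one_le_natCast_smul, ← hD]
  refine finsum_derivation_apply_eq D _ (fun j => ?_) (fun j => ?_) P
  · exact (Set.finite_singleton ((j : ℤ) - n).toNat).subset
      fun k hk => by_contra (hk <| hD_X j k ·)
  · rw [finsum_eq_single _ _ (hD_X j), hD, LopDerivation_X, pderiv_X]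
    rcases le_or_gt n j with h | h
    · rw [show (((((j : ℤ) - n).toNat : ℕ) : ℤ) + n).toNat = j by omega, Pi.single_eq_same,
        mul_one]
    · rw [show ((j : ℤ) - n).toNat = 0 by omega]
      simp

theorem Lop_eq_LopDerivation_add {n : ℤ} (hn : -1 ≤ n) (P : MvPolynomial ℕ ℝ) :
    Lop n P = LopDerivation n P +
      ∑ k ∈ Finset.range ((n + 1).toNat), pderiv k (pderiv (n.toNat - k) P) := by
  rw [Lop, finsum_smul_X_mul_pderiv_eq_LopDerivation hn]

theorem Lop_neg_one (P : MvPolynomial ℕ ℝ) : Lop (-1) P = LopDerivation (-1) P := by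
  simp [Lop_eq_LopDerivation_add le_rfl]

theorem Lop_natCast (n : ℕ) (P : MvPolynomial ℕ ℝ) :
    Lop n P = LopDerivation n P + ∑ k ∈ Finset.range (n + 1), pderiv k (pderiv (n - k) P) := by
  simp [Lop_eq_LopDerivation_add (by omega : (-1 : ℤ) ≤ n)]

theorem Lop_natCast_succ_commutator (n : ℕ) (P : MvPolynomial ℕ ℝ) :
    Lop (n + 1 : ℕ) (Lop (-1) P) - Lop (-1) (Lop (n + 1 : ℕ) P) =
      ((n + 2 : ℕ) : ℝ) • Lop n P := by
  have h₁ := congrArg (· P) (lie_LopDerivation_LopDerivation_neg_one (n + 1 : ℕ))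
  simp only [Derivation.commutator_apply, Derivation.smul_apply, Nat.cast_add, Nat.cast_one,
    add_sub_cancel_right] at h₁
  have h₂ := sum_pderiv_pderiv_LopDerivation_neg_one n P
  simp only [Lop_neg_one, Lop_natCast, map_add]
  push_cast at h₁ h₂ ⊢
  rw [smul_add]
  linear_combination (norm := module) h₁ + h₂

theorem smul_X_mul_Lop_commutator (k : ℕ) (P : MvPolynomial ℕ ℝ) :
    (k : ℝ) • (X k * Lop k (Lop (-1) P)) - Lop (-1) ((k : ℝ) • (X k * Lop k P)) =
      ((k : ℝ) * (k + 1)) • (X k * Lop ((k : ℤ) - 1) P - X (k + 1) * Lop k P) := by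
  cases k with
  | zero => simp [Lop_neg_one]
  | succ m =>
    have h := Lop_natCast_succ_commutator m P
    simp only [Lop_neg_one] at h ⊢
    rw [Derivation.map_smul, Derivation.leibniz, LopDerivation_neg_one_X,
      show ((m + 1 : ℕ) : ℤ) - 1 = m by push_cast; ring]
    have hX : X (m + 1) * Lop (m + 1 : ℕ) (LopDerivation (-1) P) -
        X (m + 1) * LopDerivation (-1) (Lop (m + 1 : ℕ) P) =
          ((m + 2 : ℕ) : ℝ) • (X (m + 1) * Lop m P) := by
      rw [← mul_sub, h, mul_smul_comm]
    simp only [smul_eq_mul, mul_smul_comm]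
    rw [mul_comm (Lop _ P)]
    push_cast at hX ⊢
    linear_combination (norm := module) (m + 1 : ℝ) • hX

theorem eventually_Lop_eq_zero (Q : MvPolynomial ℕ ℝ) : ∀ᶠ n : ℤ in atTop, Lop n Q = 0 := by
  set B := Q.vars.sup id
  have hvar : ∀ j ∈ Q.vars, j ≤ B := fun j hj => Finset.le_sup (f := id) hj
  filter_upwards [eventually_gt_atTop (2 * B : ℤ)] with n hn
  lift n to ℕ using by omega
  have hD : LopDerivation n Q = 0 := derivation_eq_zero_of_forall_mem_vars fun j hj => by
    have := hvar j hj
    simp [LopDerivation_X, show ((j : ℤ) - n).toNat = 0 by omega]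
  have hS : ∀ k ∈ Finset.range (n + 1), pderiv k (pderiv (n - k) Q) = 0 := fun k _ => by
    by_cases h : n - k ∈ Q.vars
    · have hk : k ∉ Q.vars := fun hk => by
        have := hvar _ h
        have := hvar _ hk
        omega
      rw [pderiv_pderiv_comm, pderiv_eq_zero_of_notMem_vars hk, map_zero]
    · rw [pderiv_eq_zero_of_notMem_vars h, map_zero]
  rw [Lop_natCast, hD, Finset.sum_eq_zero hS, add_zero]

theorem W0op_eq_finsum (Q : MvPolynomial ℕ ℝ) :
    W0op Q = ∑ᶠ k : ℕ, (k : ℝ) • (X k * Lop k Q) := by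
  simp_rw [W0op, ite_one_le_natCast_smul]

theorem eventually_Lop_natCast_eq_zero (Q : MvPolynomial ℕ ℝ) :
    ∀ᶠ k : ℕ in atTop, Lop k Q = 0 :=
  tendsto_natCast_atTop_atTop.eventually (eventually_Lop_eq_zero Q)

theorem eventually_Lop_natCast_sub_one_eq_zero (Q : MvPolynomial ℕ ℝ) :
    ∀ᶠ k : ℕ in atTop, Lop ((k : ℤ) - 1) Q = 0 := by
  obtain ⟨N, hN⟩ := eventually_atTop.1 (eventually_Lop_eq_zero Q)
  exact eventually_atTop.2 ⟨N.toNat + 1, fun k hk => hN _ (by omega)⟩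

theorem W0op_Lop_neg_one_sub_Lop_neg_one_W0op (P : MvPolynomial ℕ ℝ) :
    W0op (Lop (-1) P) - Lop (-1) (W0op P) =
      ∑ᶠ k : ℕ, ((k : ℝ) * (k + 1)) • (X k * Lop ((k : ℤ) - 1) P - X (k + 1) * Lop k P) := by
  have hL := eventually_Lop_natCast_eq_zero
  rw [W0op_eq_finsum, W0op_eq_finsum, Lop_neg_one (finsum _),
    map_finsum _ (hasFiniteSupport_of_eventually_eq_zero ((hL P).mono fun k hk => by simp [hk]))]
  simp_rw [← Lop_neg_one]
  rw [← finsum_sub_distrib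
    (hasFiniteSupport_of_eventually_eq_zero ((hL (Lop (-1) P)).mono fun k hk => by simp [hk]))
    (hasFiniteSupport_of_eventually_eq_zero ((hL P).mono fun k hk => by simp [hk, Lop_neg_one]))]
  exact finsum_congr (smul_X_mul_Lop_commutator · P)

/-- `F̂_2 := [½Ŵ_0, F̂_1] = ∑_{k≥1} k t_k L̂_{k-1}`, where `F̂_1 = L̂_{-1}`. -/
theorem F2_eq (P : MvPolynomial ℕ ℝ) :
    (1 / 2 : ℝ) • (W0op (Lop (-1) P) - Lop (-1) (W0op P)) =
      ∑ᶠ k : ℕ, if 1 ≤ k then (k : ℝ) • (X k * Lop ((k : ℤ) - 1) P) else 0 := by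
  have hL := eventually_Lop_natCast_sub_one_eq_zero P
  set g : ℕ → MvPolynomial ℕ ℝ := fun k => ((k : ℝ) * (k - 1)) • (X k * Lop ((k : ℤ) - 1) P)
  have hg : ∀ᶠ k in atTop, g k = 0 := hL.mono fun k hk => by simp [g, hk]
  have hterm (k : ℕ) :
      ((k : ℝ) * (k + 1)) • (X k * Lop ((k : ℤ) - 1) P - X (k + 1) * Lop k P) =
        (2 : ℝ) • ((k : ℝ) • (X k * Lop ((k : ℤ) - 1) P)) + (g k - g (k + 1)) := by
    simp only [g]
    push_cast
    simp only [add_sub_cancel_right]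
    module
  have hr : Function.HasFiniteSupport fun k : ℕ => (k : ℝ) • (X k * Lop ((k : ℤ) - 1) P) :=
    hasFiniteSupport_of_eventually_eq_zero (hL.mono fun k hk => by simp [hk])
  simp_rw [ite_one_le_natCast_smul]
  rw [W0op_Lop_neg_one_sub_Lop_neg_one_W0op, finsum_congr hterm, finsum_add_distrib
    (hasFiniteSupport_of_eventually_eq_zero (hL.mono fun k hk => by simp [hk]))
    (hasFiniteSupport_of_eventually_eq_zero
      ((hg.and ((tendsto_add_atTop_nat 1).eventually hg)).mono fun k hk => by simp [hk.1, hk.2])),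
    finsum_sub_succ hg, ← smul_finsum' _ hr]
  simp [g, smul_smul]
end

section
/- With W^1_n = ∑_{i=1}^N (∂/∂z_i) z_i^{n+1} and W^2_m = ∑_{i=1}^N (∂²/∂z_i²) z_i^{m+2} - 2∑_{i=1}^N ∑_{j≠i} (∂/∂z_i) z_i^{m+2}/(z_i - z_j), acting on smooth functions of pairwise distinct z_1,...,z_N, one has [W^1_n, W^2_m] = (m - 2n) W^2_{m+n} + 2n(n+1) W^1_{m+n} - 2 ∑_{k=0}^{n-1} (n-k) W^1_{m+n-k} W^0_k, where W^0_k is multiplication by ∑_i z_i^k. -/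
/-- Partial derivative of `f : (Fin N → ℝ) → ℝ` in the `i`-th coordinate at `z`. -/
noncomputable def pd {N : ℕ} (i : Fin N) (f : (Fin N → ℝ) → ℝ) (z : Fin N → ℝ) : ℝ :=
  deriv (fun t => f (Function.update z i t)) (z i)

/-- `W^1_n = ∑_i ∂/∂z_i ∘ z_i^{n+1}`. -/
noncomputable def W1 {N : ℕ} (n : ℤ) (f : (Fin N → ℝ) → ℝ) (z : Fin N → ℝ) : ℝ :=
  ∑ i : Fin N, pd i (fun w => w i ^ (n + 1) * f w) z

/-- `W^2_m = ∑_i ∂²/∂z_i² ∘ z_i^{m+2} - 2 ∑_i ∑_{j≠i} ∂/∂z_i ∘ (z_i^{m+2}/(z_i - z_j))`. -/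
noncomputable def W2 {N : ℕ} (m : ℤ) (f : (Fin N → ℝ) → ℝ) (z : Fin N → ℝ) : ℝ :=
  ∑ i : Fin N, pd i (pd i (fun w => w i ^ (m + 2) * f w)) z -
    2 * ∑ i : Fin N, ∑ j ∈ Finset.univ.filter (fun j => j ≠ i),
      pd i (fun w => w i ^ (m + 2) / (w i - w j) * f w) z

/-- `W^0_k` is multiplication by the power sum `∑_i z_i^k`. -/
noncomputable def W0m {N : ℕ} (k : ℤ) (f : (Fin N → ℝ) → ℝ) (z : Fin N → ℝ) : ℝ :=
  (∑ i : Fin N, z i ^ k) * f z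

namespace CommW
variable {N : ℕ}

/-- slice derivative predicate -/
def HasPd (i : Fin N) (f : (Fin N → ℝ) → ℝ) (z : Fin N → ℝ) (d : ℝ) : Prop :=
  HasDerivAt (fun t => f (Function.update z i t)) d (z i)

theorem HasPd.pd_eq {i : Fin N} {f z d} (h : HasPd i f z d) : pd i f z = d :=
  h.deriv

theorem tendsto_update (z : Fin N → ℝ) (i : Fin N) :
    Filter.Tendsto (fun t => Function.update z i t) (nhds (z i)) (nhds z) := by
  have h : ContinuousAt (Function.update z i) (z i) :=
    (hasDerivAt_update z i (z i)).continuousAt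
  simpa [Function.update_eq_self] using h.tendsto

theorem pd_congr {f g : (Fin N → ℝ) → ℝ} {z : Fin N → ℝ} (h : f =ᶠ[nhds z] g) (i : Fin N) :
    pd i f z = pd i g z :=
  Filter.EventuallyEq.deriv_eq (h.comp_tendsto (tendsto_update z i))

theorem HasPd.congr {f g : (Fin N → ℝ) → ℝ} {z : Fin N → ℝ} {i : Fin N} {d : ℝ}
    (h : HasPd i f z d) (hfg : f =ᶠ[nhds z] g) : HasPd i g z d :=
  h.congr_of_eventuallyEq ((hfg.symm).comp_tendsto (tendsto_update z i))

theorem hasPd_of_contDiff {f : (Fin N → ℝ) → ℝ} (hf : ContDiff ℝ (⊤ : ℕ∞) f) (i : Fin N)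
    (z : Fin N → ℝ) : HasPd i f z (pd i f z) := by
  have h1 : DifferentiableAt ℝ (f ∘ Function.update z i) (z i) :=
    DifferentiableAt.comp (z i) ((hf.differentiable (by simp)).differentiableAt)
      (hasDerivAt_update z i (z i)).differentiableAt
  exact h1.hasDerivAt

theorem pd_eq_fderiv {f : (Fin N → ℝ) → ℝ} (hf : DifferentiableAt ℝ f z) (i : Fin N) :
    pd i f z = fderiv ℝ f z (Pi.single i 1) := by
  have h : HasDerivAt (fun t => f (Function.update z i t)) (fderiv ℝ f z (Pi.single i 1)) (z i) := by
    have h2 := (hasDerivAt_update z i (z i))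
    have h3 : HasFDerivAt f (fderiv ℝ f z) (Function.update z i (z i)) := by
      rw [Function.update_eq_self]; exact hf.hasFDerivAt
    exact h3.comp_hasDerivAt (z i) h2
  exact h.deriv

theorem contDiff_pd {f : (Fin N → ℝ) → ℝ} (hf : ContDiff ℝ (⊤ : ℕ∞) f) (i : Fin N) :
    ContDiff ℝ (⊤ : ℕ∞) (pd i f) := by
  have h : (pd i f) = fun z => fderiv ℝ f z (Pi.single i 1) := by
    funext z; exact pd_eq_fderiv ((hf.differentiable (by simp)).differentiableAt) i
  rw [h]
  exact (ContinuousLinearMap.apply ℝ ℝ (Pi.single i 1)).contDiff.comp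
    (hf.fderiv_right (m := (⊤ : ℕ∞)) (by simp))

theorem pd_comm {f : (Fin N → ℝ) → ℝ} (hf : ContDiff ℝ (⊤ : ℕ∞) f) (i j : Fin N) (z : Fin N → ℝ) :
    pd i (pd j f) z = pd j (pd i f) z := by
  have hdf : ∀ w, DifferentiableAt ℝ f w := fun w => (hf.differentiable (by simp)).differentiableAt
  have hfd : ContDiff ℝ 1 (fderiv ℝ f) := hf.fderiv_right (by exact WithTop.coe_le_coe.mpr le_top)
  have hsym := second_derivative_symmetric (f' := fderiv ℝ f)
    (f'' := fderiv ℝ (fderiv ℝ f) z) (fun w => (hdf w).hasFDerivAt)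
    ((hfd.differentiable (by simp)).differentiableAt).hasFDerivAt
  have key : ∀ a b : Fin N, pd a (pd b f) z = fderiv ℝ (fderiv ℝ f) z (Pi.single a 1) (Pi.single b 1) := by
    intro a b
    have hpdb : pd b f = fun w => fderiv ℝ f w (Pi.single b 1) := by
      funext w; exact pd_eq_fderiv (hdf w) b
    rw [hpdb]
    have hc : HasDerivAt (fun t => fderiv ℝ f (Function.update z a t))
        (fderiv ℝ (fderiv ℝ f) z (Pi.single a 1)) (z a) := by
      have h3 : HasFDerivAt (fderiv ℝ f) (fderiv ℝ (fderiv ℝ f) z) (Function.update z a (z a)) := by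
        rw [Function.update_eq_self]
        exact ((hfd.differentiable (by simp)).differentiableAt).hasFDerivAt
      exact h3.comp_hasDerivAt (z a) (hasDerivAt_update z a (z a))
    have h4 := (ContinuousLinearMap.apply ℝ ℝ ((Pi.single b 1 : Fin N → ℝ))).hasFDerivAt.comp_hasDerivAt (z a) hc
    exact h4.deriv
  rw [key i j, key j i]
  exact hsym _ _


theorem HasPd.add {i : Fin N} {f g : (Fin N → ℝ) → ℝ} {df dg : ℝ}
    (hf : HasPd i f z df) (hg : HasPd i g z dg) :
    HasPd i (fun w => f w + g w) z (df + dg) := HasDerivAt.add hf hg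

theorem HasPd.sub {i : Fin N} {f g : (Fin N → ℝ) → ℝ} {df dg : ℝ}
    (hf : HasPd i f z df) (hg : HasPd i g z dg) :
    HasPd i (fun w => f w - g w) z (df - dg) := HasDerivAt.sub hf hg

theorem HasPd.const_mul {i : Fin N} {f : (Fin N → ℝ) → ℝ} {df : ℝ} (c : ℝ)
    (hf : HasPd i f z df) : HasPd i (fun w => c * f w) z (c * df) := HasDerivAt.const_mul c hf

theorem HasPd.mul {i : Fin N} {f g : (Fin N → ℝ) → ℝ} {df dg : ℝ}
    (hf : HasPd i f z df) (hg : HasPd i g z dg) :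
    HasPd i (fun w => f w * g w) z (df * g z + f z * dg) := by
  have h := HasDerivAt.fun_mul hf hg
  unfold HasPd; simpa [Function.update_eq_self] using h

theorem HasPd.sum {i : Fin N} {ι : Type*} {s : Finset ι} {F : ι → (Fin N → ℝ) → ℝ}
    {d : ι → ℝ} (h : ∀ k ∈ s, HasPd i (F k) z (d k)) :
    HasPd i (fun w => ∑ k ∈ s, F k w) z (∑ k ∈ s, d k) := HasDerivAt.fun_sum h

/-- compose with one coordinate -/
theorem hasPd_comp1_self {i : Fin N} {g : ℝ → ℝ} {d : ℝ}
    (h : HasDerivAt g d (z i)) : HasPd i (fun w => g (w i)) z d := by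
  unfold HasPd; simp only [Function.update_self]; exact h

theorem hasPd_comp1_other {i k : Fin N} {g : ℝ → ℝ} (hik : i ≠ k) :
    HasPd k (fun w => g (w i)) z 0 := by
  unfold HasPd; simp only [Function.update_of_ne hik]; exact hasDerivAt_const _ _

/-- compose with two coordinates -/
theorem hasPd_comp2_i {i j : Fin N} {g : ℝ → ℝ → ℝ} {d : ℝ} (hij : j ≠ i)
    (h : HasDerivAt (fun t => g t (z j)) d (z i)) :
    HasPd i (fun w => g (w i) (w j)) z d := by
  unfold HasPd; simp only [Function.update_self, Function.update_of_ne hij]; exact h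

theorem hasPd_comp2_j {i j : Fin N} {g : ℝ → ℝ → ℝ} {d : ℝ} (hij : i ≠ j)
    (h : HasDerivAt (fun t => g (z i) t) d (z j)) :
    HasPd j (fun w => g (w i) (w j)) z d := by
  unfold HasPd; simp only [Function.update_self, Function.update_of_ne hij]; exact h

theorem hasPd_comp2_other {i j k : Fin N} {g : ℝ → ℝ → ℝ} (hik : i ≠ k) (hjk : j ≠ k) :
    HasPd k (fun w => g (w i) (w j)) z 0 := by
  unfold HasPd; simp only [Function.update_of_ne hik, Function.update_of_ne hjk]
  exact hasDerivAt_const _ _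

/-! ### rational coefficient functions -/

noncomputable def phiF (q : ℤ) (x y : ℝ) : ℝ := x ^ q / (x - y)
noncomputable def phiX (q : ℤ) (x y : ℝ) : ℝ :=
  ((q : ℝ) * x ^ (q - 1) * (x - y) - x ^ q) / (x - y) ^ 2
noncomputable def phiY (q : ℤ) (x y : ℝ) : ℝ := x ^ q / (x - y) ^ 2
noncomputable def phiXX (q : ℤ) (x y : ℝ) : ℝ :=
  ((q : ℝ) * ((q : ℝ) - 1) * x ^ (q - 2) * (x - y) ^ 2 - 2 * (q : ℝ) * x ^ (q - 1) * (x - y)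
    + 2 * x ^ q) / (x - y) ^ 3
noncomputable def phiXY (q : ℤ) (x y : ℝ) : ℝ :=
  ((q : ℝ) * x ^ (q - 1) * (x - y) - 2 * x ^ q) / (x - y) ^ 3

variable {x y : ℝ}

theorem hasDerivAt_phiF_x (q : ℤ) (hx : x ≠ 0) (hxy : x ≠ y) :
    HasDerivAt (fun t => phiF q t y) (phiX q x y) x := by
  have h := (hasDerivAt_zpow q x (Or.inl hx)).div ((hasDerivAt_id x).sub_const y)
    (sub_ne_zero.2 hxy)
  refine h.congr_deriv ?_
  simp only [phiX, id_eq, mul_one]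

theorem hasDerivAt_phiF_y (q : ℤ) (hxy : x ≠ y) :
    HasDerivAt (fun t => phiF q x t) (phiY q x y) y := by
  have h := (hasDerivAt_const y (x ^ q)).div ((hasDerivAt_id y).const_sub x)
    (sub_ne_zero.2 hxy)
  refine h.congr_deriv ?_
  simp only [phiY, id_eq]
  rw [div_eq_div_iff (pow_ne_zero _ (sub_ne_zero.2 hxy)) (pow_ne_zero _ (sub_ne_zero.2 hxy))]
  ring

theorem hasDerivAt_phiX_x (q : ℤ) (hx : x ≠ 0) (hxy : x ≠ y) :
    HasDerivAt (fun t => phiX q t y) (phiXX q x y) x := by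
  have hxy2 : x - y ≠ 0 := sub_ne_zero.2 hxy
  have hnum : HasDerivAt (fun t => (q : ℝ) * t ^ (q - 1) * (t - y) - t ^ q)
      (((q : ℝ) * (((q : ℝ) - 1) * x ^ (q - 1 - 1))) * (x - y) + (q : ℝ) * x ^ (q - 1) * 1
        - (q : ℝ) * x ^ (q - 1)) x := by
    have h := ((((hasDerivAt_zpow (q - 1) x (Or.inl hx)).const_mul (q : ℝ)).mul
      ((hasDerivAt_id x).sub_const y)).sub (hasDerivAt_zpow q x (Or.inl hx)))
    refine h.congr_deriv ?_
    simp only [id_eq]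
    push_cast
    ring
  have hden : HasDerivAt (fun t => ((t - y) ^ 2 : ℝ)) (2 * (x - y)) x := by
    have h := ((hasDerivAt_id x).sub_const y).pow 2
    refine h.congr_deriv ?_
    simp only [id_eq]
    norm_num
  have h := hnum.div hden (pow_ne_zero 2 hxy2)
  refine h.congr_deriv ?_
  simp only [phiXX, id_eq]
  have e1 : q - 1 - 1 = q - 2 := by ring
  rw [e1]
  have hq : (x : ℝ) ^ q = x ^ (q - 1) * x := by
    rw [← zpow_add_one₀ hx]; congr 1; omega
  have hq2 : (x : ℝ) ^ (q - 1) = x ^ (q - 2) * x := by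
    rw [← zpow_add_one₀ hx]; congr 1; omega
  rw [div_eq_div_iff (pow_ne_zero _ (pow_ne_zero _ hxy2)) (pow_ne_zero _ hxy2), hq, hq2]
  ring

theorem hasDerivAt_phiX_y (q : ℤ) (hxy : x ≠ y) :
    HasDerivAt (fun t => phiX q x t) (phiXY q x y) y := by
  have hxy2 : x - y ≠ 0 := sub_ne_zero.2 hxy
  have hnum : HasDerivAt (fun t => (q : ℝ) * x ^ (q - 1) * (x - t) - x ^ q)
      (((q : ℝ) * x ^ (q - 1)) * (-1) - 0) y := by
    have h := (((hasDerivAt_id y).const_sub x).const_mul ((q : ℝ) * x ^ (q - 1))).sub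
      (hasDerivAt_const y (x ^ q))
    refine h.congr_deriv ?_
    try simp only [id_eq]
    try ring
  have hden : HasDerivAt (fun t => ((x - t) ^ 2 : ℝ)) (2 * (x - y) * (-1)) y := by
    have h := (((hasDerivAt_id y).const_sub x).pow 2)
    refine h.congr_deriv ?_
    simp only [id_eq]
    norm_num
  have h := hnum.div hden (pow_ne_zero 2 hxy2)
  refine h.congr_deriv ?_
  simp only [phiXY, id_eq]
  rw [div_eq_div_iff (pow_ne_zero _ (pow_ne_zero _ hxy2)) (pow_ne_zero _ hxy2)]
  ring



variable {x y : ℝ}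
noncomputable def Q0v (n : ℕ) (x y : ℝ) : ℝ :=
  ∑ k ∈ Finset.range n, ((n : ℝ) - k) * x ^ (n - 1 - k) * y ^ k
noncomputable def S2v (n : ℕ) (x y : ℝ) : ℝ :=
  ∑ k ∈ Finset.range n, ((n : ℝ) - k) ^ 2 * x ^ (n - 1 - k) * y ^ k
noncomputable def Gv (n : ℕ) (x y : ℝ) : ℝ :=
  ∑ k ∈ Finset.range (n + 1), x ^ (n - k) * y ^ k

variable {x y : ℝ}

theorem Gv_succ (n : ℕ) : Gv (n + 1) x y = x * Gv n x y + y ^ (n + 1) := by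
  unfold Gv
  rw [Finset.sum_range_succ, Finset.mul_sum]
  have h1 : ∀ k ∈ Finset.range (n + 1), x ^ (n + 1 - k) * y ^ k = x * (x ^ (n - k) * y ^ k) := by
    intro k hk
    rw [Finset.mem_range] at hk
    have : n + 1 - k = (n - k) + 1 := by omega
    rw [this, pow_succ]
    ring
  rw [Finset.sum_congr rfl h1]
  simp

theorem Q0v_succ (n : ℕ) : Q0v (n + 1) x y = x * Q0v n x y + Gv n x y := by
  unfold Q0v Gv
  rw [Finset.sum_range_succ, Finset.mul_sum]
  have h1 : ∀ k ∈ Finset.range n,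
      ((n : ℝ) + 1 - k) * x ^ (n - k) * y ^ k
        = x * (((n : ℝ) - k) * x ^ (n - 1 - k) * y ^ k) + x ^ (n - k) * y ^ k := by
    intro k hk
    rw [Finset.mem_range] at hk
    have e2 : n - k = (n - 1 - k) + 1 := by omega
    rw [e2, pow_succ]
    push_cast
    ring
  push_cast
  rw [Finset.sum_congr rfl h1, Finset.sum_add_distrib, Finset.sum_range_succ]
  push_cast
  ring

theorem S2v_succ (n : ℕ) :
    S2v (n + 1) x y = x * S2v n x y + 2 * x * Q0v n x y + Gv n x y := by
  unfold S2v Q0v Gv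
  rw [Finset.sum_range_succ]
  rw [Finset.mul_sum, Finset.mul_sum]
  have h1 : ∀ k ∈ Finset.range n,
      ((n : ℝ) + 1 - k) ^ 2 * x ^ (n - k) * y ^ k
        = x * (((n : ℝ) - k) ^ 2 * x ^ (n - 1 - k) * y ^ k)
          + 2 * x * (((n : ℝ) - k) * x ^ (n - 1 - k) * y ^ k) + x ^ (n - k) * y ^ k := by
    intro k hk
    rw [Finset.mem_range] at hk
    have e2 : n - k = (n - 1 - k) + 1 := by omega
    rw [e2, pow_succ]
    push_cast
    ring
  push_cast
  rw [Finset.sum_congr rfl h1]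
  rw [Finset.sum_add_distrib, Finset.sum_add_distrib, Finset.sum_range_succ]
  push_cast
  ring

theorem Gv_mul (n : ℕ) : Gv n x y * (x - y) = x ^ (n + 1) - y ^ (n + 1) := by
  induction n with
  | zero => simp [Gv]
  | succ n ih =>
    rw [Gv_succ, add_mul, mul_assoc, ih]
    ring

theorem Q0v_mul (n : ℕ) :
    Q0v n x y * (x - y) ^ 2 = n * x ^ (n + 1) - (n + 1) * x ^ n * y + y ^ (n + 1) := by
  induction n with
  | zero => simp [Q0v]
  | succ n ih =>
    have hg := Gv_mul (x := x) (y := y) n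
    rw [Q0v_succ, add_mul, mul_assoc, ih]
    have : Gv n x y * (x - y) ^ 2 = (x ^ (n + 1) - y ^ (n + 1)) * (x - y) := by
      rw [pow_two, ← mul_assoc, hg]
    rw [this]
    push_cast
    ring

theorem S2v_mul (n : ℕ) :
    S2v n x y * (x - y) ^ 3
      = ((n : ℝ) + 1) ^ 2 * x ^ n * (x - y) ^ 2
        - 2 * x * ((n : ℝ) * x ^ (n + 1) - ((n : ℝ) + 1) * x ^ n * y + y ^ (n + 1))
        - (x ^ (n + 1) - y ^ (n + 1)) * (x - y) := by
  induction n with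
  | zero => simp only [S2v, Finset.range_zero, Finset.sum_empty, Nat.cast_zero]; push_cast; ring
  | succ n ih =>
    have hg := Gv_mul (x := x) (y := y) n
    have hq := Q0v_mul (x := x) (y := y) n
    rw [S2v_succ, add_mul, add_mul, mul_assoc, mul_assoc, ih]
    have e1 : Gv n x y * (x - y) ^ 3 = (x ^ (n + 1) - y ^ (n + 1)) * (x - y) ^ 2 := by
      rw [pow_succ' (x - y) 2, ← mul_assoc, hg]
    have e2 : Q0v n x y * (x - y) ^ 3
        = ((n : ℝ) * x ^ (n + 1) - ((n : ℝ) + 1) * x ^ n * y + y ^ (n + 1)) * (x - y) := by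
      rw [pow_succ (x - y) 2, ← mul_assoc, hq]
    rw [e1, e2]
    push_cast
    ring

theorem sum_gauss (n : ℕ) :
    ∑ k ∈ Finset.range n, ((n : ℝ) - k) = n * (n + 1) / 2 := by
  induction n with
  | zero => simp
  | succ n ih =>
    rw [Finset.sum_range_succ]
    push_cast
    rw [Finset.sum_congr rfl (fun k hk => by push_cast; ring :
      ∀ k ∈ Finset.range n, ((n : ℝ) + 1 - (k : ℝ)) = ((n : ℝ) - k) + 1)]
    rw [Finset.sum_add_distrib, ih]
    simp
    ring

theorem ident1 (m : ℤ) (n : ℕ) {x y : ℝ} (hx : x ≠ 0) (hxy : x ≠ y) :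
    x ^ ((n : ℤ) + 1) * phiX (m + 2) x y + y ^ ((n : ℤ) + 1) * phiY (m + 2) x y
      - ((n : ℝ) + 1) * x ^ (n : ℤ) * phiF (m + 2) x y
    = ((m : ℝ) - 2 * (n : ℝ)) * phiF (m + (n : ℤ) + 2) x y
      + ∑ k ∈ Finset.range n, ((n : ℝ) - k) * (x ^ (m + (n : ℤ) - (k : ℤ) + 1) * y ^ (k : ℕ)) := by
  have hs : x - y ≠ 0 := sub_ne_zero.2 hxy
  have hsum : ∑ k ∈ Finset.range n, ((n : ℝ) - k) * (x ^ (m + (n : ℤ) - (k : ℤ) + 1) * y ^ (k : ℕ))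
      = x ^ (m + 2) * Q0v n x y := by
    unfold Q0v
    rw [Finset.mul_sum]
    refine Finset.sum_congr rfl fun k hk => ?_
    rw [Finset.mem_range] at hk
    have e : m + (n : ℤ) - (k : ℤ) + 1 = (m + 2) + ((n - 1 - k : ℕ) : ℤ) := by
      have : ((n - 1 - k : ℕ) : ℤ) = (n : ℤ) - 1 - (k : ℤ) := by omega
      omega
    rw [e, zpow_add₀ hx, zpow_natCast]
    ring
  rw [hsum]
  have hQ : Q0v n x y = ((n : ℝ) * x ^ (n + 1) - ((n : ℝ) + 1) * x ^ n * y + y ^ (n + 1))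
      / (x - y) ^ 2 := (eq_div_iff (pow_ne_zero 2 hs)).mpr (Q0v_mul n)
  rw [hQ]
  unfold phiF phiX phiY
  have r1 : (x : ℝ) ^ ((n : ℤ) + 1) = x ^ (n + 1) := by
    rw [show (n : ℤ) + 1 = ((n + 1 : ℕ) : ℤ) by omega, zpow_natCast]
  have r2 : (x : ℝ) ^ (n : ℤ) = x ^ n := zpow_natCast x n
  have r3 : (y : ℝ) ^ ((n : ℤ) + 1) = y ^ (n + 1) := by
    rw [show (n : ℤ) + 1 = ((n + 1 : ℕ) : ℤ) by omega, zpow_natCast]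
  have r4 : (x : ℝ) ^ (m + (n : ℤ) + 2) = x ^ (m + 2) * x ^ n := by
    rw [show m + (n : ℤ) + 2 = (m + 2) + (n : ℤ) by ring, zpow_add₀ hx, zpow_natCast]
  have r5 : (x : ℝ) ^ (m + 2 - 1) = x ^ (m + 2) * x⁻¹ := by
    rw [show m + 2 - 1 = (m + 2) + (-1) by ring, zpow_add₀ hx, zpow_neg_one]
  rw [r1, r2, r3, r4, r5]
  field_simp
  push_cast
  ring

theorem ident2 (m : ℤ) (n : ℕ) {x y : ℝ} (hx : x ≠ 0) (hxy : x ≠ y) :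
    x ^ ((n : ℤ) + 1) * phiXX (m + 2) x y + y ^ ((n : ℤ) + 1) * phiXY (m + 2) x y
      - ((n : ℝ) + 1) * (n : ℝ) * x ^ ((n : ℤ) - 1) * phiF (m + 2) x y
    = ((m : ℝ) - 2 * (n : ℝ)) * phiX (m + (n : ℤ) + 2) x y
      + ∑ k ∈ Finset.range n, ((n : ℝ) - k)
          * (((m : ℝ) + (n : ℝ) - (k : ℝ) + 1) * x ^ (m + (n : ℤ) - (k : ℤ)) * y ^ (k : ℕ)) := by
  have hs : x - y ≠ 0 := sub_ne_zero.2 hxy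
  have hsum : ∑ k ∈ Finset.range n, ((n : ℝ) - k)
        * (((m : ℝ) + (n : ℝ) - (k : ℝ) + 1) * x ^ (m + (n : ℤ) - (k : ℤ)) * y ^ (k : ℕ))
      = x ^ (m + 1) * (((m : ℝ) + 1) * Q0v n x y + S2v n x y) := by
    unfold Q0v S2v
    simp only [mul_add, Finset.mul_sum]
    rw [← Finset.sum_add_distrib]
    refine Finset.sum_congr rfl fun k hk => ?_
    rw [Finset.mem_range] at hk
    have e : m + (n : ℤ) - (k : ℤ) = (m + 1) + ((n - 1 - k : ℕ) : ℤ) := by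
      have : ((n - 1 - k : ℕ) : ℤ) = (n : ℤ) - 1 - (k : ℤ) := by omega
      omega
    rw [e, zpow_add₀ hx, zpow_natCast]
    ring
  rw [hsum]
  have hQ : Q0v n x y = ((n : ℝ) * x ^ (n + 1) - ((n : ℝ) + 1) * x ^ n * y + y ^ (n + 1))
      / (x - y) ^ 2 := (eq_div_iff (pow_ne_zero 2 hs)).mpr (Q0v_mul n)
  have hS : S2v n x y = (((n : ℝ) + 1) ^ 2 * x ^ n * (x - y) ^ 2
        - 2 * x * ((n : ℝ) * x ^ (n + 1) - ((n : ℝ) + 1) * x ^ n * y + y ^ (n + 1))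
        - (x ^ (n + 1) - y ^ (n + 1)) * (x - y)) / (x - y) ^ 3 :=
    (eq_div_iff (pow_ne_zero 3 hs)).mpr (S2v_mul n)
  rw [hQ, hS]
  unfold phiF phiX phiXX phiXY
  have r1 : (x : ℝ) ^ ((n : ℤ) + 1) = x ^ (n + 1) := by
    rw [show (n : ℤ) + 1 = ((n + 1 : ℕ) : ℤ) by omega, zpow_natCast]
  have r3 : (y : ℝ) ^ ((n : ℤ) + 1) = y ^ (n + 1) := by
    rw [show (n : ℤ) + 1 = ((n + 1 : ℕ) : ℤ) by omega, zpow_natCast]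
  have r4 : (x : ℝ) ^ (m + (n : ℤ) + 2) = x ^ (m + 2) * x ^ n := by
    rw [show m + (n : ℤ) + 2 = (m + 2) + (n : ℤ) by ring, zpow_add₀ hx, zpow_natCast]
  have r5 : (x : ℝ) ^ (m + 2 - 1) = x ^ (m + 2) * x⁻¹ := by
    rw [show m + 2 - 1 = (m + 2) + (-1) by ring, zpow_add₀ hx, zpow_neg_one]
  have r6 : (x : ℝ) ^ (m + 2 - 2) = x ^ (m + 2) * x⁻¹ * x⁻¹ := by
    rw [show m + 2 - 2 = (m + 2) + (-1) + (-1) by ring, zpow_add₀ hx, zpow_add₀ hx, zpow_neg_one]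
  have r7 : (x : ℝ) ^ ((n : ℤ) - 1) = x ^ n * x⁻¹ := by
    rw [show (n : ℤ) - 1 = (n : ℤ) + (-1) by ring, zpow_add₀ hx, zpow_natCast, zpow_neg_one]
  have r8 : (x : ℝ) ^ (m + 1) = x ^ (m + 2) * x⁻¹ := by
    rw [show m + 1 = (m + 2) + (-1) by ring, zpow_add₀ hx, zpow_neg_one]
  have r9 : (x : ℝ) ^ (m + (n : ℤ) + 2 - 1) = x ^ (m + 2) * x ^ n * x⁻¹ := by
    rw [show m + (n : ℤ) + 2 - 1 = (m + 2) + (n : ℤ) + (-1) by ring, zpow_add₀ hx,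
      zpow_add₀ hx, zpow_natCast, zpow_neg_one]
  rw [r1, r3, r4, r5, r6, r7, r8, r9]
  field_simp
  push_cast
  ring




section Ops
variable {N : ℕ} {f g : (Fin N → ℝ) → ℝ} {z : Fin N → ℝ}

theorem eventually_ne_coord (i : Fin N) (h : z i ≠ 0) : ∀ᶠ w in nhds z, w i ≠ 0 :=
  (continuous_apply i).continuousAt.eventually_ne h

theorem eventually_U (hz : Function.Injective z) (hz0 : ∀ i, z i ≠ 0) :
    ∀ᶠ w in nhds z, Function.Injective w ∧ ∀ i, w i ≠ 0 := by
  have h2 : ∀ᶠ w in nhds z, ∀ i j : Fin N, i ≠ j → w i ≠ w j := by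
    rw [Filter.eventually_all]
    intro i
    rw [Filter.eventually_all]
    intro j
    by_cases hij : i = j
    · exact Filter.Eventually.of_forall fun w h => absurd hij h
    · have hne : z i - z j ≠ 0 := sub_ne_zero.2 fun h => hij (hz h)
      have := (((continuous_apply i).sub (continuous_apply j)).continuousAt
        (x := z)).eventually_ne hne
      exact this.mono fun w hw _ => sub_ne_zero.1 hw
  have h3 : ∀ᶠ w in nhds z, ∀ i, w i ≠ 0 := by
    rw [Filter.eventually_all]
    intro i
    exact eventually_ne_coord i (hz0 i)
  exact (h2.and h3).mono fun w hw => ⟨fun a b hab => by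
    by_contra hne
    exact hw.1 a b hne hab, hw.2⟩

theorem W1_apply (q : ℤ) (hz0 : ∀ i, z i ≠ 0) (d : Fin N → ℝ)
    (hg : ∀ i, HasPd i g z (d i)) :
    W1 q g z = ∑ i, (((q : ℝ) + 1) * z i ^ q * g z + z i ^ (q + 1) * d i) := by
  unfold W1
  refine Finset.sum_congr rfl fun i _ => ?_
  have h := (hasPd_comp1_self (g := fun t => t ^ (q + 1))
    (hasDerivAt_zpow (q + 1) (z i) (Or.inl (hz0 i)))).mul (hg i)
  rw [h.pd_eq]
  have e : q + 1 - 1 = q := by ring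
  rw [e]
  push_cast
  ring

theorem hasPd_powsum (k : ℤ) (hz0 : ∀ i, z i ≠ 0) (i : Fin N) :
    HasPd i (fun w => ∑ j, w j ^ k) z ((k : ℝ) * z i ^ (k - 1)) := by
  have h := HasPd.sum (i := i) (z := z) (s := Finset.univ)
    (F := fun j => fun w => w j ^ k)
    (d := fun j => if j = i then (k : ℝ) * z i ^ (k - 1) else 0)
    (fun j _ => by
      by_cases hj : j = i
      · subst hj
        simp only [if_pos rfl]
        exact hasPd_comp1_self (hasDerivAt_zpow k (z j) (Or.inl (hz0 j)))
      · simp only [if_neg hj]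
        exact hasPd_comp1_other (g := fun t => t ^ k) hj)
  simpa using h

theorem hasPd_W0m (k : ℕ) (hf : ContDiff ℝ (⊤ : ℕ∞) f) (hz0 : ∀ i, z i ≠ 0) (i : Fin N) :
    HasPd i (W0m (k : ℤ) f) z
      ((k : ℝ) * z i ^ ((k : ℤ) - 1) * f z + (∑ j, z j ^ (k : ℤ)) * pd i f z) := by
  have h := (hasPd_powsum (k : ℤ) hz0 i).mul (hasPd_of_contDiff hf i z)
  have e : (k : ℝ) * z i ^ ((k : ℤ) - 1) * f z + (∑ j, z j ^ (k : ℤ)) * pd i f z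
      = (k : ℝ) * z i ^ ((k : ℤ) - 1) * f z + (∑ j, z j ^ (k : ℤ)) * pd i f z := rfl
  exact h

theorem W2_apply (m : ℤ) (hg : ContDiff ℝ (⊤ : ℕ∞) g) (hz : Function.Injective z)
    (hz0 : ∀ i, z i ≠ 0) :
    W2 m g z = (∑ i, (((m : ℝ) + 2) * ((m : ℝ) + 1) * z i ^ m * g z
        + 2 * ((m : ℝ) + 2) * z i ^ (m + 1) * pd i g z
        + z i ^ (m + 2) * pd i (pd i g) z))
      - 2 * ∑ i, ∑ j ∈ Finset.univ.filter (fun j => j ≠ i),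
          (phiX (m + 2) (z i) (z j) * g z + phiF (m + 2) (z i) (z j) * pd i g z) := by
  unfold W2
  congr 1
  · refine Finset.sum_congr rfl fun i _ => ?_
    have heq : (pd i (fun w => w i ^ (m + 2) * g w)) =ᶠ[nhds z]
        (fun w => ((m : ℝ) + 2) * (w i ^ (m + 1) * g w) + w i ^ (m + 2) * pd i g w) := by
      filter_upwards [eventually_ne_coord i (hz0 i)] with w hw
      have h := (hasPd_comp1_self (g := fun t => t ^ (m + 2))
        (hasDerivAt_zpow (m + 2) (w i) (Or.inl hw))).mul (hasPd_of_contDiff hg i w)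
      rw [h.pd_eq]
      have e : m + 2 - 1 = m + 1 := by ring
      rw [e]
      push_cast
      ring
    rw [pd_congr heq i]
    have h2 : HasPd i (fun w => ((m : ℝ) + 2) * (w i ^ (m + 1) * g w)
        + w i ^ (m + 2) * pd i g w) z
        (((m : ℝ) + 2) * (((m + 1 : ℤ) : ℝ) * z i ^ (m + 1 - 1) * g z + z i ^ (m + 1) * pd i g z)
          + (((m + 2 : ℤ) : ℝ) * z i ^ (m + 2 - 1) * pd i g z
            + z i ^ (m + 2) * pd i (pd i g) z)) := by
      exact (((hasPd_comp1_self (hasDerivAt_zpow (m + 1) (z i) (Or.inl (hz0 i)))).mul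
        (hasPd_of_contDiff hg i z)).const_mul _).add
        ((hasPd_comp1_self (hasDerivAt_zpow (m + 2) (z i) (Or.inl (hz0 i)))).mul
        (hasPd_of_contDiff (contDiff_pd hg i) i z))
    rw [h2.pd_eq]
    have e1 : m + 1 - 1 = m := by ring
    have e2 : m + 2 - 1 = m + 1 := by ring
    rw [e1, e2]
    push_cast
    ring
  · congr 1
    refine Finset.sum_congr rfl fun i _ => Finset.sum_congr rfl fun j hj => ?_
    rw [Finset.mem_filter] at hj
    have hij : j ≠ i := hj.2
    have hzij : z i ≠ z j := fun h => hij (hz h.symm)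
    have h := (hasPd_comp2_i (g := fun a b => phiF (m + 2) a b) hij
      (hasDerivAt_phiF_x (m + 2) (hz0 i) hzij)).mul (hasPd_of_contDiff hg i z)
    exact h.pd_eq

theorem W1nf_eq (n : ℕ) (hf : ContDiff ℝ (⊤ : ℕ∞) f) :
    W1 (n : ℤ) f = fun w => ∑ k, (((n : ℝ) + 1) * (w k ^ (n : ℤ) * f w)
      + w k ^ ((n : ℤ) + 1) * pd k f w) := by
  funext w
  unfold W1
  refine Finset.sum_congr rfl fun k _ => ?_
  have h := (hasPd_comp1_self (g := fun t => t ^ ((n : ℤ) + 1))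
    (hasDerivAt_zpow ((n : ℤ) + 1) (w k) (Or.inr (by positivity)))).mul
    (hasPd_of_contDiff hf k w)
  rw [h.pd_eq]
  have e : (n : ℤ) + 1 - 1 = (n : ℤ) := by ring
  rw [e]
  push_cast
  ring

theorem contDiff_coord_zpow (k : Fin N) (q : ℕ) :
    ContDiff ℝ (⊤ : ℕ∞) (fun w : Fin N → ℝ => w k ^ (q : ℤ)) := by
  have : (fun w : Fin N → ℝ => w k ^ (q : ℤ)) = fun w : Fin N → ℝ => w k ^ q := by
    funext w; exact zpow_natCast _ _
  rw [this]
  exact ((ContinuousLinearMap.proj k : (Fin N → ℝ) →L[ℝ] ℝ).contDiff).pow q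

theorem contDiff_W1nf (n : ℕ) (hf : ContDiff ℝ (⊤ : ℕ∞) f) : ContDiff ℝ (⊤ : ℕ∞) (W1 (n : ℤ) f) := by
  rw [W1nf_eq n hf]
  refine ContDiff.sum fun k _ => ContDiff.add ?_ ?_
  · exact (contDiff_const (c := (n:ℝ)+1)).mul ((contDiff_coord_zpow k n).mul hf)
  · have h1 : ContDiff ℝ (⊤ : ℕ∞) (fun w : Fin N → ℝ => w k ^ ((n : ℤ) + 1)) := by
      have := contDiff_coord_zpow (N := N) k (n + 1)
      have e : ((n + 1 : ℕ) : ℤ) = (n : ℤ) + 1 := by omega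
      rwa [e] at this
    exact h1.mul (contDiff_pd hf k)

end Ops


section AB
variable {N : ℕ} {f : (Fin N → ℝ) → ℝ} {z : Fin N → ℝ} {m : ℤ} {n : ℕ}

theorem hasPd_coordq (q : ℤ) (i k : Fin N) (hz0i : k = i → z i ≠ 0) :
    HasPd k (fun w => w i ^ q) z (if k = i then (q : ℝ) * z i ^ (q - 1) else 0) := by
  by_cases hk : k = i
  · subst hk
    simp only [if_pos rfl]
    exact hasPd_comp1_self (hasDerivAt_zpow q (z k) (Or.inl (hz0i rfl)))
  · simp only [if_neg hk]
    exact hasPd_comp1_other (g := fun t => t ^ q) fun h => hk h.symm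

theorem hasPd_phiF_coef {i j k : Fin N} (q : ℤ) (hij : j ≠ i) (hz0i : z i ≠ 0)
    (hzij : z i ≠ z j) :
    HasPd k (fun w => phiF q (w i) (w j)) z
      (if k = i then phiX q (z i) (z j) else if k = j then phiY q (z i) (z j) else 0) := by
  by_cases hki : k = i
  · subst hki
    simp only [if_pos rfl]
    exact hasPd_comp2_i hij (hasDerivAt_phiF_x q hz0i hzij)
  · by_cases hkj : k = j
    · subst hkj
      simp only [if_neg hki, if_pos rfl]
      exact hasPd_comp2_j (fun h => hki h.symm) (hasDerivAt_phiF_y q hzij)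
    · simp only [if_neg hki, if_neg hkj]
      exact hasPd_comp2_other (fun h => hki h.symm) (fun h => hkj h.symm)

theorem hasPd_phiX_coef {i j k : Fin N} (q : ℤ) (hij : j ≠ i) (hz0i : z i ≠ 0)
    (hzij : z i ≠ z j) :
    HasPd k (fun w => phiX q (w i) (w j)) z
      (if k = i then phiXX q (z i) (z j) else if k = j then phiXY q (z i) (z j) else 0) := by
  by_cases hki : k = i
  · subst hki
    simp only [if_pos rfl]
    exact hasPd_comp2_i hij (hasDerivAt_phiX_x q hz0i hzij)
  · by_cases hkj : k = j
    · subst hkj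
      simp only [if_neg hki, if_pos rfl]
      exact hasPd_comp2_j (fun h => hki h.symm) (hasDerivAt_phiX_y q hzij)
    · simp only [if_neg hki, if_neg hkj]
      exact hasPd_comp2_other (fun h => hki h.symm) (fun h => hkj h.symm)

/-- normal form of `W2 m f` -/
noncomputable def nf2 (m : ℤ) (f : (Fin N → ℝ) → ℝ) : (Fin N → ℝ) → ℝ := fun w =>
  (∑ i, ((((m : ℝ) + 2) * ((m : ℝ) + 1)) * (w i ^ m * f w)
      + ((2 * ((m : ℝ) + 2)) * (w i ^ (m + 1) * pd i f w)
      + w i ^ (m + 2) * pd i (pd i f) w)))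
  - 2 * ∑ i, ∑ j ∈ Finset.univ.filter (fun j => j ≠ i),
      (phiX (m + 2) (w i) (w j) * f w + phiF (m + 2) (w i) (w j) * pd i f w)

theorem nf2_eventually (hf : ContDiff ℝ (⊤ : ℕ∞) f) (hz : Function.Injective z)
    (hz0 : ∀ i, z i ≠ 0) : W2 m f =ᶠ[nhds z] nf2 m f := by
  filter_upwards [eventually_U hz hz0] with w hw
  rw [W2_apply m hf hw.1 hw.2]
  unfold nf2
  congr 1
  refine Finset.sum_congr rfl fun i _ => ?_
  ring

/-- value of `pd k` of the diagonal `i`-term of `nf2` -/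
noncomputable def DDdiag (m : ℤ) (f : (Fin N → ℝ) → ℝ) (z : Fin N → ℝ) (k i : Fin N) : ℝ :=
  (((m : ℝ) + 2) * ((m : ℝ) + 1)) * ((if k = i then (m : ℝ) * z i ^ (m - 1) else 0) * f z
      + z i ^ m * pd k f z)
  + ((2 * ((m : ℝ) + 2)) * ((if k = i then ((m + 1 : ℤ) : ℝ) * z i ^ (m + 1 - 1) else 0) * pd i f z
      + z i ^ (m + 1) * pd k (pd i f) z)
    + ((if k = i then ((m + 2 : ℤ) : ℝ) * z i ^ (m + 2 - 1) else 0) * pd i (pd i f) z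
      + z i ^ (m + 2) * pd k (pd i (pd i f)) z))

noncomputable def DDpair (m : ℤ) (f : (Fin N → ℝ) → ℝ) (z : Fin N → ℝ) (k i j : Fin N) : ℝ :=
  ((if k = i then phiXX (m + 2) (z i) (z j) else if k = j then phiXY (m + 2) (z i) (z j) else 0)
      * f z + phiX (m + 2) (z i) (z j) * pd k f z)
  + ((if k = i then phiX (m + 2) (z i) (z j) else if k = j then phiY (m + 2) (z i) (z j) else 0)
      * pd i f z + phiF (m + 2) (z i) (z j) * pd k (pd i f) z)

noncomputable def DD (m : ℤ) (f : (Fin N → ℝ) → ℝ) (z : Fin N → ℝ) (k : Fin N) : ℝ :=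
  (∑ i, DDdiag m f z k i)
    - 2 * ∑ i, ∑ j ∈ Finset.univ.filter (fun j => j ≠ i), DDpair m f z k i j

theorem hasPd_nf2 (hf : ContDiff ℝ (⊤ : ℕ∞) f) (hz : Function.Injective z) (hz0 : ∀ i, z i ≠ 0)
    (k : Fin N) : HasPd k (nf2 m f) z (DD m f z k) := by
  unfold nf2 DD
  refine HasPd.sub (HasPd.sum fun i _ => ?_) (HasPd.const_mul 2 (HasPd.sum fun i _ =>
    HasPd.sum fun j hj => ?_))
  · exact (((hasPd_coordq m i k (fun _ => hz0 i)).mul (hasPd_of_contDiff hf k z)).const_mul _).add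
      ((((hasPd_coordq (m + 1) i k (fun _ => hz0 i)).mul
          (hasPd_of_contDiff (contDiff_pd hf i) k z)).const_mul _).add
        ((hasPd_coordq (m + 2) i k (fun _ => hz0 i)).mul
          (hasPd_of_contDiff (contDiff_pd (contDiff_pd hf i) i) k z)))
  · rw [Finset.mem_filter] at hj
    have hij : j ≠ i := hj.2
    have hzij : z i ≠ z j := fun h => hij (hz h.symm)
    exact ((hasPd_phiX_coef (m + 2) hij (hz0 i) hzij).mul
        (hasPd_of_contDiff hf k z)).add
      ((hasPd_phiF_coef (m + 2) hij (hz0 i) hzij).mul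
        (hasPd_of_contDiff (contDiff_pd hf i) k z))

theorem hasPd_W2 (hf : ContDiff ℝ (⊤ : ℕ∞) f) (hz : Function.Injective z) (hz0 : ∀ i, z i ≠ 0)
    (k : Fin N) : HasPd k (W2 m f) z (DD m f z k) :=
  (hasPd_nf2 hf hz hz0 k).congr (nf2_eventually hf hz hz0).symm

theorem ABeq (hf : ContDiff ℝ (⊤ : ℕ∞) f) (hz : Function.Injective z) (hz0 : ∀ i, z i ≠ 0) :
    W1 (n : ℤ) (W2 m f) z = ∑ k, (((n : ℝ) + 1) * z k ^ (n : ℤ) * W2 m f z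
      + z k ^ ((n : ℤ) + 1) * DD m f z k) := by
  have h := W1_apply (g := W2 m f) (n : ℤ) hz0 (DD m f z) (hasPd_W2 hf hz hz0)
  push_cast at h
  exact h

end AB


section BA
variable {N : ℕ} {f : (Fin N → ℝ) → ℝ} {z : Fin N → ℝ} {m : ℤ} {n : ℕ}

theorem pd3_comm (hf : ContDiff ℝ (⊤ : ℕ∞) f) (i k : Fin N) (z : Fin N → ℝ) :
    pd i (pd i (pd k f)) z = pd k (pd i (pd i f)) z := by
  have h1 : pd i (pd k f) = pd k (pd i f) := funext fun w => pd_comm hf i k w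
  rw [h1]
  exact pd_comm (contDiff_pd hf i) i k z

/-- normal form of `pd i (W1 n f)` -/
noncomputable def dHfun (n : ℕ) (f : (Fin N → ℝ) → ℝ) (i : Fin N) : (Fin N → ℝ) → ℝ := fun w =>
  ((((n : ℝ) + 1) * (n : ℝ)) * (w i ^ ((n : ℤ) - 1) * f w)
  + (∑ k, ((n : ℝ) + 1) * (w k ^ (n : ℤ) * pd i f w)))
  + (((n : ℝ) + 1) * (w i ^ (n : ℤ) * pd i f w)
  + ∑ k, w k ^ ((n : ℤ) + 1) * pd i (pd k f) w)

theorem pdW1_at (hf : ContDiff ℝ (⊤ : ℕ∞) f) (i : Fin N) (w : Fin N → ℝ) (hw : w i ≠ 0) :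
    pd i (W1 (n : ℤ) f) w = dHfun n f i w := by
  rw [W1nf_eq n hf]
  have h : HasPd i (fun v => ∑ k, (((n : ℝ) + 1) * (v k ^ (n : ℤ) * f v)
      + v k ^ ((n : ℤ) + 1) * pd k f v)) w
      (∑ k, ((((n : ℝ) + 1) * ((if i = k then ((n : ℤ) : ℝ) * w k ^ ((n : ℤ) - 1) else 0) * f w
          + w k ^ (n : ℤ) * pd i f w))
        + ((if i = k then (((n : ℤ) + 1 : ℤ) : ℝ) * w k ^ ((n : ℤ) + 1 - 1) else 0) * pd k f w
          + w k ^ ((n : ℤ) + 1) * pd i (pd k f) w))) := by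
    refine HasPd.sum fun k _ => HasPd.add ?_ ?_
    · exact ((hasPd_coordq (n : ℤ) k i (fun h => by rw [← h]; exact hw)).mul
        (hasPd_of_contDiff hf i w)).const_mul ((n : ℝ) + 1)
    · exact (hasPd_coordq ((n : ℤ) + 1) k i (fun h => by rw [← h]; exact hw)).mul
        (hasPd_of_contDiff (contDiff_pd hf k) i w)
  rw [h.pd_eq]
  have e2 : (n : ℤ) + 1 - 1 = (n : ℤ) := by ring
  have key : ∀ k ∈ Finset.univ, ((((n : ℝ) + 1) * ((if i = k then ((n : ℤ) : ℝ)
        * w k ^ ((n : ℤ) - 1) else 0) * f w + w k ^ (n : ℤ) * pd i f w))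
      + ((if i = k then (((n : ℤ) + 1 : ℤ) : ℝ) * w k ^ ((n : ℤ) + 1 - 1) else 0) * pd k f w
        + w k ^ ((n : ℤ) + 1) * pd i (pd k f) w))
      = (if i = k then ((((n : ℝ) + 1) * (n : ℝ)) * (w i ^ ((n : ℤ) - 1) * f w)
          + ((n : ℝ) + 1) * (w i ^ (n : ℤ) * pd i f w)) else 0)
        + ((((n : ℝ) + 1) * (w k ^ (n : ℤ) * pd i f w))
          + w k ^ ((n : ℤ) + 1) * pd i (pd k f) w) := by
    intro k _
    by_cases hik : i = k
    · subst hik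
      simp only [if_pos rfl]
      rw [e2]
      push_cast
      ring
    · simp only [if_neg hik]
      ring
  rw [Finset.sum_congr rfl key, Finset.sum_add_distrib, Finset.sum_ite_eq,
    if_pos (Finset.mem_univ i), Finset.sum_add_distrib]
  unfold dHfun
  ring

theorem pdW1_ev (hf : ContDiff ℝ (⊤ : ℕ∞) f) (hz0 : ∀ i, z i ≠ 0) (i : Fin N) :
    pd i (W1 (n : ℤ) f) =ᶠ[nhds z] dHfun n f i := by
  filter_upwards [eventually_ne_coord i (hz0 i)] with w hw
  exact pdW1_at hf i w hw

/-- value of `pd i (pd i (W1 n f))` at `z` -/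
noncomputable def ddHval (n : ℕ) (f : (Fin N → ℝ) → ℝ) (z : Fin N → ℝ) (i : Fin N) : ℝ :=
  ((n : ℝ) + 1) * (n : ℝ) * ((n : ℝ) - 1) * z i ^ ((n : ℤ) - 2) * f z
  + 3 * (((n : ℝ) + 1) * (n : ℝ)) * z i ^ ((n : ℤ) - 1) * pd i f z
  + (∑ k, ((n : ℝ) + 1) * (z k ^ (n : ℤ) * pd i (pd i f) z))
  + 2 * ((n : ℝ) + 1) * z i ^ (n : ℤ) * pd i (pd i f) z
  + ∑ k, z k ^ ((n : ℤ) + 1) * pd k (pd i (pd i f)) z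

theorem pdpdW1 (hf : ContDiff ℝ (⊤ : ℕ∞) f) (hz0 : ∀ i, z i ≠ 0) (i : Fin N) :
    pd i (pd i (W1 (n : ℤ) f)) z = ddHval n f z i := by
  rw [pd_congr (pdW1_ev hf hz0 i) i]
  have h : HasPd i (dHfun n f i) z
      (((((n : ℝ) + 1) * (n : ℝ)) * ((((n : ℤ) - 1 : ℤ) : ℝ) * z i ^ ((n : ℤ) - 1 - 1) * f z
          + z i ^ ((n : ℤ) - 1) * pd i f z)
        + (∑ k, ((n : ℝ) + 1) * ((if i = k then ((n : ℤ) : ℝ) * z k ^ ((n : ℤ) - 1) else 0)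
            * pd i f z + z k ^ (n : ℤ) * pd i (pd i f) z)))
      + (((n : ℝ) + 1) * ((((n : ℤ) : ℝ)) * z i ^ ((n : ℤ) - 1) * pd i f z
          + z i ^ (n : ℤ) * pd i (pd i f) z)
        + ∑ k, ((if i = k then (((n : ℤ) + 1 : ℤ) : ℝ) * z k ^ ((n : ℤ) + 1 - 1) else 0)
            * pd i (pd k f) z + z k ^ ((n : ℤ) + 1) * pd i (pd i (pd k f)) z))) := by
    unfold dHfun
    refine HasPd.add (HasPd.add ?_ ?_) (HasPd.add ?_ ?_)
    · exact ((hasPd_comp1_self (hasDerivAt_zpow ((n : ℤ) - 1) (z i) (Or.inl (hz0 i)))).mul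
        (hasPd_of_contDiff hf i z)).const_mul _
    · exact HasPd.sum fun k _ => ((hasPd_coordq (n : ℤ) k i (fun h => by rw [← h]; exact hz0 i)).mul
        (hasPd_of_contDiff (contDiff_pd hf i) i z)).const_mul _
    · have hh := (hasPd_comp1_self (hasDerivAt_zpow (n : ℤ) (z i) (Or.inl (hz0 i)))).mul
        (hasPd_of_contDiff (contDiff_pd hf i) i z)
      exact hh.const_mul _
    · exact HasPd.sum fun k _ =>
        (hasPd_coordq ((n : ℤ) + 1) k i (fun h => by rw [← h]; exact hz0 i)).mul
          (hasPd_of_contDiff (contDiff_pd (contDiff_pd hf k) i) i z)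
  rw [h.pd_eq]
  have e1 : (n : ℤ) - 1 - 1 = (n : ℤ) - 2 := by ring
  have e2 : (n : ℤ) + 1 - 1 = (n : ℤ) := by ring
  have key1 : ∀ k ∈ Finset.univ, ((n : ℝ) + 1) * ((if i = k then ((n : ℤ) : ℝ)
        * z k ^ ((n : ℤ) - 1) else 0) * pd i f z + z k ^ (n : ℤ) * pd i (pd i f) z)
      = (if i = k then (((n : ℝ) + 1) * (n : ℝ)) * (z i ^ ((n : ℤ) - 1) * pd i f z) else 0)
        + ((n : ℝ) + 1) * (z k ^ (n : ℤ) * pd i (pd i f) z) := by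
    intro k _
    by_cases hik : i = k
    · subst hik; simp only [if_pos rfl]; push_cast; ring
    · simp only [if_neg hik]; ring
  have key2 : ∀ k ∈ Finset.univ, ((if i = k then (((n : ℤ) + 1 : ℤ) : ℝ)
        * z k ^ ((n : ℤ) + 1 - 1) else 0) * pd i (pd k f) z
        + z k ^ ((n : ℤ) + 1) * pd i (pd i (pd k f)) z)
      = (if i = k then ((n : ℝ) + 1) * (z i ^ (n : ℤ) * pd i (pd i f) z) else 0)
        + z k ^ ((n : ℤ) + 1) * pd k (pd i (pd i f)) z := by
    intro k _
    rw [pd3_comm hf i k z]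
    by_cases hik : i = k
    · subst hik; simp only [if_pos rfl]; rw [e2]; push_cast; ring
    · simp only [if_neg hik]; ring
  rw [Finset.sum_congr rfl key1, Finset.sum_congr rfl key2, Finset.sum_add_distrib,
    Finset.sum_add_distrib, Finset.sum_ite_eq, Finset.sum_ite_eq]
  simp only [if_pos (Finset.mem_univ i)]
  rw [e1]
  unfold ddHval
  push_cast
  ring

theorem BAeq (hf : ContDiff ℝ (⊤ : ℕ∞) f) (hz : Function.Injective z) (hz0 : ∀ i, z i ≠ 0) :
    W2 m (W1 (n : ℤ) f) z = (∑ i, (((m : ℝ) + 2) * ((m : ℝ) + 1) * z i ^ m * W1 (n : ℤ) f z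
        + 2 * ((m : ℝ) + 2) * z i ^ (m + 1) * dHfun n f i z
        + z i ^ (m + 2) * ddHval n f z i))
      - 2 * ∑ i, ∑ j ∈ Finset.univ.filter (fun j => j ≠ i),
          (phiX (m + 2) (z i) (z j) * W1 (n : ℤ) f z
            + phiF (m + 2) (z i) (z j) * dHfun n f i z) := by
  rw [W2_apply m (contDiff_W1nf n hf) hz hz0]
  congr 1
  · refine Finset.sum_congr rfl fun i _ => ?_
    rw [pdW1_at hf i z (hz0 i), pdpdW1 hf hz0 i]
  · congr 1
    refine Finset.sum_congr rfl fun i _ => Finset.sum_congr rfl fun j _ => ?_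
    rw [pdW1_at hf i z (hz0 i)]

end BA


section Collapse
variable {N : ℕ} {f : (Fin N → ℝ) → ℝ} {z : Fin N → ℝ} {m : ℤ} {n : ℕ}

theorem sumDDdiag (i : Fin N) :
    ∑ k, z k ^ ((n : ℤ) + 1) * DDdiag m f z k i
    = z i ^ ((n : ℤ) + 1) * ((((m : ℝ) + 2) * ((m : ℝ) + 1)) * ((m : ℝ) * z i ^ (m - 1)) * f z
        + (2 * ((m : ℝ) + 2)) * (((m : ℝ) + 1) * z i ^ m) * pd i f z
        + ((m : ℝ) + 2) * z i ^ (m + 1) * pd i (pd i f) z)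
      + (((m : ℝ) + 2) * ((m : ℝ) + 1)) * (z i ^ m * ∑ k, z k ^ ((n : ℤ) + 1) * pd k f z)
      + (2 * ((m : ℝ) + 2)) * (z i ^ (m + 1) * ∑ k, z k ^ ((n : ℤ) + 1) * pd k (pd i f) z)
      + z i ^ (m + 2) * ∑ k, z k ^ ((n : ℤ) + 1) * pd k (pd i (pd i f)) z := by
  have key : ∀ k ∈ Finset.univ, z k ^ ((n : ℤ) + 1) * DDdiag m f z k i
      = (if k = i then z i ^ ((n : ℤ) + 1)
            * ((((m : ℝ) + 2) * ((m : ℝ) + 1)) * ((m : ℝ) * z i ^ (m - 1)) * f z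
            + (2 * ((m : ℝ) + 2)) * (((m : ℝ) + 1) * z i ^ m) * pd i f z
            + ((m : ℝ) + 2) * z i ^ (m + 1) * pd i (pd i f) z) else 0)
        + ((((m : ℝ) + 2) * ((m : ℝ) + 1)) * (z i ^ m * (z k ^ ((n : ℤ) + 1) * pd k f z))
          + (2 * ((m : ℝ) + 2)) * (z i ^ (m + 1) * (z k ^ ((n : ℤ) + 1) * pd k (pd i f) z))
          + z i ^ (m + 2) * (z k ^ ((n : ℤ) + 1) * pd k (pd i (pd i f)) z)) := by
    intro k _
    unfold DDdiag
    by_cases hk : k = i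
    · subst hk
      simp only [if_pos rfl]
      have e1 : m + 1 - 1 = m := by ring
      have e2 : m + 2 - 1 = m + 1 := by ring
      rw [e1, e2]
      push_cast
      ring
    · simp only [if_neg hk]
      ring
  rw [Finset.sum_congr rfl key, Finset.sum_add_distrib, Finset.sum_ite_eq',
    if_pos (Finset.mem_univ i), Finset.sum_add_distrib, Finset.sum_add_distrib,
    ← Finset.mul_sum, ← Finset.mul_sum, ← Finset.mul_sum, ← Finset.mul_sum, ← Finset.mul_sum]
  ring

theorem sumDDpair {i j : Fin N} (hij : j ≠ i) :
    ∑ k, z k ^ ((n : ℤ) + 1) * DDpair m f z k i j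
    = z i ^ ((n : ℤ) + 1) * (phiXX (m + 2) (z i) (z j) * f z
          + phiX (m + 2) (z i) (z j) * pd i f z)
      + z j ^ ((n : ℤ) + 1) * (phiXY (m + 2) (z i) (z j) * f z
          + phiY (m + 2) (z i) (z j) * pd i f z)
      + phiX (m + 2) (z i) (z j) * ∑ k, z k ^ ((n : ℤ) + 1) * pd k f z
      + phiF (m + 2) (z i) (z j) * ∑ k, z k ^ ((n : ℤ) + 1) * pd k (pd i f) z := by
  have key : ∀ k ∈ Finset.univ, z k ^ ((n : ℤ) + 1) * DDpair m f z k i j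
      = (if k = i then z i ^ ((n : ℤ) + 1) * (phiXX (m + 2) (z i) (z j) * f z
            + phiX (m + 2) (z i) (z j) * pd i f z) else 0)
        + (if k = j then z j ^ ((n : ℤ) + 1) * (phiXY (m + 2) (z i) (z j) * f z
            + phiY (m + 2) (z i) (z j) * pd i f z) else 0)
        + (phiX (m + 2) (z i) (z j) * (z k ^ ((n : ℤ) + 1) * pd k f z)
          + phiF (m + 2) (z i) (z j) * (z k ^ ((n : ℤ) + 1) * pd k (pd i f) z)) := by
    intro k _
    unfold DDpair
    split_ifs with h1 h2 h3
    · exact absurd (h1.symm.trans h2).symm hij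
    · rw [h1]; ring
    · rw [h3]; ring
    · ring
  rw [Finset.sum_congr rfl key, Finset.sum_add_distrib, Finset.sum_add_distrib,
    Finset.sum_ite_eq', Finset.sum_ite_eq', if_pos (Finset.mem_univ i),
    if_pos (Finset.mem_univ j), Finset.sum_add_distrib, ← Finset.mul_sum, ← Finset.mul_sum]
  ring

/-- `dHfun` at the base point, with Schwarz applied -/
theorem dHfun_z (hf : ContDiff ℝ (⊤ : ℕ∞) f) (i : Fin N) :
    dHfun n f i z = (((n : ℝ) + 1) * (n : ℝ)) * (z i ^ ((n : ℤ) - 1) * f z)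
      + ((n : ℝ) + 1) * ((∑ k, z k ^ (n : ℤ)) * pd i f z)
      + ((n : ℝ) + 1) * (z i ^ (n : ℤ) * pd i f z)
      + ∑ k, z k ^ ((n : ℤ) + 1) * pd k (pd i f) z := by
  unfold dHfun
  rw [Finset.sum_congr rfl (fun k _ => by rw [pd_comm hf i k z] :
    ∀ k ∈ Finset.univ, z k ^ ((n : ℤ) + 1) * pd i (pd k f) z
      = z k ^ ((n : ℤ) + 1) * pd k (pd i f) z)]
  rw [← Finset.mul_sum, ← Finset.sum_mul]
  ring

end Collapse


section Canon
variable {N : ℕ} {f : (Fin N → ℝ) → ℝ} {z : Fin N → ℝ} {m : ℤ} {n : ℕ}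

noncomputable def DIAGCAN (m : ℤ) (n : ℕ) (f : (Fin N → ℝ) → ℝ) (z : Fin N → ℝ)
    (i : Fin N) : ℝ :=
  (((m : ℝ) + 2) * ((m : ℝ) + 1) * (m : ℝ) - 2 * ((m : ℝ) + 2) * ((n : ℝ) + 1) * (n : ℝ)
      - ((n : ℝ) + 1) * (n : ℝ) * ((n : ℝ) - 1)) * z i ^ (m + (n : ℤ)) * f z
  + (2 * ((m : ℝ) + 2) * ((m : ℝ) + 1) - 2 * ((m : ℝ) + 2) * ((n : ℝ) + 1)
      - 3 * ((n : ℝ) + 1) * (n : ℝ)) * z i ^ (m + (n : ℤ) + 1) * pd i f z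
  + ((m : ℝ) - 2 * (n : ℝ)) * z i ^ (m + (n : ℤ) + 2) * pd i (pd i f) z

noncomputable def PAIRCAN (m : ℤ) (n : ℕ) (f : (Fin N → ℝ) → ℝ) (z : Fin N → ℝ)
    (i j : Fin N) : ℝ :=
  (z i ^ ((n : ℤ) + 1) * phiXX (m + 2) (z i) (z j)
    + z j ^ ((n : ℤ) + 1) * phiXY (m + 2) (z i) (z j)
    - ((n : ℝ) + 1) * (n : ℝ) * z i ^ ((n : ℤ) - 1) * phiF (m + 2) (z i) (z j)) * f z
  + (z i ^ ((n : ℤ) + 1) * phiX (m + 2) (z i) (z j)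
    + z j ^ ((n : ℤ) + 1) * phiY (m + 2) (z i) (z j)
    - ((n : ℝ) + 1) * z i ^ (n : ℤ) * phiF (m + 2) (z i) (z j)) * pd i f z

theorem zpow_split (x : ℝ) (hx : x ≠ 0) (a b : ℤ) (c : ℕ) (h : a = b + c) :
    x ^ a = x ^ b * x ^ c := by
  rw [h, zpow_add₀ hx, zpow_natCast]

theorem zpow_split2 (x : ℝ) (hx : x ≠ 0) (a b c : ℤ) (d : ℕ) (h : a = b + c + d) :
    x ^ a = x ^ b * x ^ c * x ^ d := by
  rw [h, zpow_add₀ hx, zpow_add₀ hx, zpow_natCast]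

theorem merge3 (A B C : Fin N → ℝ) (P Q R : Fin N → Fin N → ℝ) :
    ((∑ i, A i) - 2 * ∑ i, ∑ j ∈ Finset.univ.filter (fun j => j ≠ i), P i j)
      + ((∑ i, B i) - 2 * ∑ i, ∑ j ∈ Finset.univ.filter (fun j => j ≠ i), Q i j)
      - ((∑ i, C i) - 2 * ∑ i, ∑ j ∈ Finset.univ.filter (fun j => j ≠ i), R i j)
    = (∑ i, (A i + B i - C i))
      - 2 * ∑ i, ∑ j ∈ Finset.univ.filter (fun j => j ≠ i), (P i j + Q i j - R i j) := by
  simp only [Finset.sum_add_distrib, Finset.sum_sub_distrib]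
  ring

theorem mul_group_sub (c : ℝ) (A : Fin N → ℝ) (B : Fin N → Fin N → ℝ) :
    c * ((∑ i, A i) - 2 * ∑ i, ∑ j ∈ Finset.univ.filter (fun j => j ≠ i), B i j)
      = (∑ i, c * A i)
        - 2 * ∑ i, ∑ j ∈ Finset.univ.filter (fun j => j ≠ i), c * B i j := by
  rw [mul_sub, Finset.mul_sum]
  congr 1
  rw [show c * (2 * ∑ i, ∑ j ∈ Finset.univ.filter (fun j => j ≠ i), B i j)
    = 2 * (c * ∑ i, ∑ j ∈ Finset.univ.filter (fun j => j ≠ i), B i j) by ring]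
  congr 1
  rw [Finset.mul_sum]
  exact Finset.sum_congr rfl fun i _ => Finset.mul_sum _ _ _

theorem LHS_canon (hf : ContDiff ℝ (⊤ : ℕ∞) f) (hz : Function.Injective z) (hz0 : ∀ i, z i ≠ 0) :
    W1 (n : ℤ) (W2 m f) z - W2 m (W1 (n : ℤ) f) z
      = (∑ i, DIAGCAN m n f z i)
        - 2 * ∑ i, ∑ j ∈ Finset.univ.filter (fun j => j ≠ i), PAIRCAN m n f z i j := by
  have hW1z : W1 (n : ℤ) f z
      = ∑ k, (((n : ℝ) + 1) * (z k ^ (n : ℤ) * f z) + z k ^ ((n : ℤ) + 1) * pd k f z) :=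
    congrFun (W1nf_eq n hf) z
  rw [ABeq hf hz hz0, BAeq hf hz hz0, Finset.sum_add_distrib]
  have hA1 : ∑ k, ((n : ℝ) + 1) * z k ^ (n : ℤ) * W2 m f z
      = (((n : ℝ) + 1) * ∑ k, z k ^ (n : ℤ)) * W2 m f z := by
    rw [← Finset.sum_mul, Finset.mul_sum]
  have hA2 : ∑ k, z k ^ ((n : ℤ) + 1) * DD m f z k
      = (∑ i, (z i ^ ((n : ℤ) + 1) * ((((m : ℝ) + 2) * ((m : ℝ) + 1)) * ((m : ℝ) * z i ^ (m - 1)) * f z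
            + (2 * ((m : ℝ) + 2)) * (((m : ℝ) + 1) * z i ^ m) * pd i f z
            + ((m : ℝ) + 2) * z i ^ (m + 1) * pd i (pd i f) z)
          + (((m : ℝ) + 2) * ((m : ℝ) + 1)) * (z i ^ m * ∑ k, z k ^ ((n : ℤ) + 1) * pd k f z)
          + (2 * ((m : ℝ) + 2)) * (z i ^ (m + 1) * ∑ k, z k ^ ((n : ℤ) + 1) * pd k (pd i f) z)
          + z i ^ (m + 2) * ∑ k, z k ^ ((n : ℤ) + 1) * pd k (pd i (pd i f)) z))
        - 2 * ∑ i, ∑ j ∈ Finset.univ.filter (fun j => j ≠ i),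
            (z i ^ ((n : ℤ) + 1) * (phiXX (m + 2) (z i) (z j) * f z
                + phiX (m + 2) (z i) (z j) * pd i f z)
              + z j ^ ((n : ℤ) + 1) * (phiXY (m + 2) (z i) (z j) * f z
                + phiY (m + 2) (z i) (z j) * pd i f z)
              + phiX (m + 2) (z i) (z j) * ∑ k, z k ^ ((n : ℤ) + 1) * pd k f z
              + phiF (m + 2) (z i) (z j) * ∑ k, z k ^ ((n : ℤ) + 1) * pd k (pd i f) z) := by
    have h1 : ∀ k, z k ^ ((n : ℤ) + 1) * DD m f z k
        = (∑ i, z k ^ ((n : ℤ) + 1) * DDdiag m f z k i)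
          - 2 * ∑ i, ∑ j ∈ Finset.univ.filter (fun j => j ≠ i),
              z k ^ ((n : ℤ) + 1) * DDpair m f z k i j := fun k =>
      mul_group_sub _ _ _
    rw [Finset.sum_congr rfl fun k _ => h1 k, Finset.sum_sub_distrib, ← Finset.mul_sum,
      Finset.sum_comm]
    congr 1
    · exact Finset.sum_congr rfl fun i _ => sumDDdiag i
    · congr 1
      rw [Finset.sum_comm]
      refine Finset.sum_congr rfl fun i _ => ?_
      rw [Finset.sum_comm]
      refine Finset.sum_congr rfl fun j hj => ?_
      rw [Finset.mem_filter] at hj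
      exact sumDDpair hj.2
  rw [hA1, hA2, W2_apply m hf hz hz0, hW1z]
  simp only [dHfun_z hf, ddHval]
  rw [mul_group_sub]
  have hW1v : ∑ k, (((n : ℝ) + 1) * (z k ^ (n : ℤ) * f z) + z k ^ ((n : ℤ) + 1) * pd k f z)
      = ((n : ℝ) + 1) * ((∑ k, z k ^ (n : ℤ)) * f z) + ∑ k, z k ^ ((n : ℤ) + 1) * pd k f z := by
    rw [Finset.sum_add_distrib, ← Finset.mul_sum, ← Finset.sum_mul]
  rw [hW1v]
  have hsum2 : ∀ i, ∑ k, ((n : ℝ) + 1) * (z k ^ (n : ℤ) * pd i (pd i f) z)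
      = ((n : ℝ) + 1) * ((∑ k, z k ^ (n : ℤ)) * pd i (pd i f) z) := fun i => by
    rw [← Finset.mul_sum, ← Finset.sum_mul]
  simp only [hsum2]
  rw [merge3]
  congr 1
  · refine Finset.sum_congr rfl fun i _ => ?_
    unfold DIAGCAN
    rw [zpow_split (z i) (hz0 i) m (m - 1) 1 (by omega),
      zpow_split (z i) (hz0 i) (m + 1) (m - 1) 2 (by omega),
      zpow_split (z i) (hz0 i) (m + 2) (m - 1) 3 (by omega),
      zpow_split (z i) (hz0 i) ((n : ℤ) - 1) ((n : ℤ) - 2) 1 (by omega),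
      zpow_split (z i) (hz0 i) (n : ℤ) ((n : ℤ) - 2) 2 (by omega),
      zpow_split (z i) (hz0 i) ((n : ℤ) + 1) ((n : ℤ) - 2) 3 (by omega),
      zpow_split2 (z i) (hz0 i) (m + (n : ℤ)) (m - 1) ((n : ℤ) - 2) 3 (by omega),
      zpow_split2 (z i) (hz0 i) (m + (n : ℤ) + 1) (m - 1) ((n : ℤ) - 2) 4 (by omega),
      zpow_split2 (z i) (hz0 i) (m + (n : ℤ) + 2) (m - 1) ((n : ℤ) - 2) 5 (by omega)]
    push_cast
    ring
  · congr 1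
    refine Finset.sum_congr rfl fun i _ => Finset.sum_congr rfl fun j _ => ?_
    unfold PAIRCAN
    ring

end Canon


section RHS
variable {N : ℕ} {f : (Fin N → ℝ) → ℝ} {z : Fin N → ℝ} {m : ℤ} {n : ℕ}

theorem sum_split_i (g : Fin N → ℝ) (i : Fin N) :
    ∑ j, g j = g i + ∑ j ∈ Finset.univ.filter (fun j => j ≠ i), g j := by
  rw [Finset.filter_ne', Finset.add_sum_erase _ g (Finset.mem_univ i)]

theorem gaussWW (hz0 : ∀ i, z i ≠ 0) (i : Fin N) :
    ∑ k ∈ Finset.range n, ((n : ℝ) - (k : ℝ))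
        * (((((m : ℤ) + (n : ℤ) - (k : ℤ) : ℤ) : ℝ) + 1) * z i ^ (m + (n : ℤ) - (k : ℤ))
            * (z i ^ ((k : ℕ) : ℤ) * f z)
          + z i ^ (m + (n : ℤ) - (k : ℤ) + 1) * ((k : ℝ) * z i ^ (((k : ℕ) : ℤ) - 1) * f z)
          + z i ^ (m + (n : ℤ) - (k : ℤ) + 1) * (z i ^ ((k : ℕ) : ℤ) * pd i f z))
      = ((n : ℝ) * ((n : ℝ) + 1) / 2) * ((((m : ℝ) + (n : ℝ) + 1) * (z i ^ (m + (n : ℤ)) * f z))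
          + z i ^ (m + (n : ℤ) + 1) * pd i f z) := by
  have key : ∀ k ∈ Finset.range n, ((n : ℝ) - (k : ℝ))
        * (((((m : ℤ) + (n : ℤ) - (k : ℤ) : ℤ) : ℝ) + 1) * z i ^ (m + (n : ℤ) - (k : ℤ))
            * (z i ^ ((k : ℕ) : ℤ) * f z)
          + z i ^ (m + (n : ℤ) - (k : ℤ) + 1) * ((k : ℝ) * z i ^ (((k : ℕ) : ℤ) - 1) * f z)
          + z i ^ (m + (n : ℤ) - (k : ℤ) + 1) * (z i ^ ((k : ℕ) : ℤ) * pd i f z))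
      = ((n : ℝ) - (k : ℝ)) * ((((m : ℝ) + (n : ℝ) + 1) * (z i ^ (m + (n : ℤ)) * f z))
          + z i ^ (m + (n : ℤ) + 1) * pd i f z) := by
    intro k _
    have e1 : z i ^ (m + (n : ℤ) - (k : ℤ)) * z i ^ ((k : ℕ) : ℤ) = z i ^ (m + (n : ℤ)) := by
      rw [← zpow_add₀ (hz0 i)]; congr 1; omega
    have e2 : z i ^ (m + (n : ℤ) - (k : ℤ) + 1) * z i ^ (((k : ℕ) : ℤ) - 1)
        = z i ^ (m + (n : ℤ)) := by
      rw [← zpow_add₀ (hz0 i)]; congr 1; omega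
    have e3 : z i ^ (m + (n : ℤ) - (k : ℤ) + 1) * z i ^ ((k : ℕ) : ℤ)
        = z i ^ (m + (n : ℤ) + 1) := by
      rw [← zpow_add₀ (hz0 i)]; congr 1; omega
    calc ((n : ℝ) - (k : ℝ)) * (((((m : ℤ) + (n : ℤ) - (k : ℤ) : ℤ) : ℝ) + 1)
            * z i ^ (m + (n : ℤ) - (k : ℤ)) * (z i ^ ((k : ℕ) : ℤ) * f z)
          + z i ^ (m + (n : ℤ) - (k : ℤ) + 1) * ((k : ℝ) * z i ^ (((k : ℕ) : ℤ) - 1) * f z)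
          + z i ^ (m + (n : ℤ) - (k : ℤ) + 1) * (z i ^ ((k : ℕ) : ℤ) * pd i f z))
        = ((n : ℝ) - (k : ℝ)) * (((((m : ℤ) + (n : ℤ) - (k : ℤ) : ℤ) : ℝ) + 1)
            * ((z i ^ (m + (n : ℤ) - (k : ℤ)) * z i ^ ((k : ℕ) : ℤ)) * f z)
          + (k : ℝ) * ((z i ^ (m + (n : ℤ) - (k : ℤ) + 1) * z i ^ (((k : ℕ) : ℤ) - 1)) * f z)
          + (z i ^ (m + (n : ℤ) - (k : ℤ) + 1) * z i ^ ((k : ℕ) : ℤ)) * pd i f z) := by ring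
      _ = ((n : ℝ) - (k : ℝ)) * ((((m : ℝ) + (n : ℝ) + 1) * (z i ^ (m + (n : ℤ)) * f z))
          + z i ^ (m + (n : ℤ) + 1) * pd i f z) := by
        rw [e1, e2, e3]
        push_cast
        ring
  rw [Finset.sum_congr rfl key, ← Finset.sum_mul, sum_gauss]

theorem RHS_canon (hf : ContDiff ℝ (⊤ : ℕ∞) f) (hz : Function.Injective z) (hz0 : ∀ i, z i ≠ 0) :
    ((m : ℝ) - 2 * (n : ℝ)) * W2 (m + (n : ℤ)) f z
      + 2 * (n : ℝ) * ((n : ℝ) + 1) * W1 (m + (n : ℤ)) f z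
      - 2 * ∑ k ∈ Finset.range n, ((n : ℝ) - (k : ℝ))
          * W1 (m + (n : ℤ) - (k : ℤ)) (W0m ((k : ℕ) : ℤ) f) z
    = (∑ i, DIAGCAN m n f z i)
      - 2 * ∑ i, ∑ j ∈ Finset.univ.filter (fun j => j ≠ i), PAIRCAN m n f z i j := by
  rw [W2_apply (m + (n : ℤ)) hf hz hz0,
    W1_apply (m + (n : ℤ)) hz0 (fun i => pd i f z) (fun i => hasPd_of_contDiff hf i z),
    mul_group_sub, Finset.mul_sum]
  have hWW : ∀ k : ℕ, W1 (m + (n : ℤ) - (k : ℤ)) (W0m ((k : ℕ) : ℤ) f) z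
      = ∑ i, ((((m + (n : ℤ) - (k : ℤ) : ℤ) : ℝ) + 1) * z i ^ (m + (n : ℤ) - (k : ℤ))
            * ((∑ j, z j ^ ((k : ℕ) : ℤ)) * f z)
          + z i ^ (m + (n : ℤ) - (k : ℤ) + 1) * ((k : ℝ) * z i ^ (((k : ℕ) : ℤ) - 1) * f z
            + (∑ j, z j ^ ((k : ℕ) : ℤ)) * pd i f z)) := fun k =>
    W1_apply (m + (n : ℤ) - (k : ℤ)) hz0 _ (hasPd_W0m k hf hz0)
  have hK : ∑ k ∈ Finset.range n, ((n : ℝ) - (k : ℝ))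
        * W1 (m + (n : ℤ) - (k : ℤ)) (W0m ((k : ℕ) : ℤ) f) z
      = ∑ i, ((((n : ℝ) * ((n : ℝ) + 1) / 2) * ((((m : ℝ) + (n : ℝ) + 1)
            * (z i ^ (m + (n : ℤ)) * f z)) + z i ^ (m + (n : ℤ) + 1) * pd i f z))
          + ∑ j ∈ Finset.univ.filter (fun j => j ≠ i), ∑ k ∈ Finset.range n,
              ((n : ℝ) - (k : ℝ)) * ((((m + (n : ℤ) - (k : ℤ) : ℤ) : ℝ) + 1)
                  * z i ^ (m + (n : ℤ) - (k : ℤ)) * (z j ^ ((k : ℕ) : ℤ) * f z)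
                + z i ^ (m + (n : ℤ) - (k : ℤ) + 1) * (z j ^ ((k : ℕ) : ℤ) * pd i f z))) := by
    rw [Finset.sum_congr rfl fun k _ => by rw [hWW k, Finset.mul_sum],
      Finset.sum_comm]
    refine Finset.sum_congr rfl fun i _ => ?_
    have key : ∀ k ∈ Finset.range n, ((n : ℝ) - (k : ℝ))
          * ((((m + (n : ℤ) - (k : ℤ) : ℤ) : ℝ) + 1) * z i ^ (m + (n : ℤ) - (k : ℤ))
              * ((∑ j, z j ^ ((k : ℕ) : ℤ)) * f z)
            + z i ^ (m + (n : ℤ) - (k : ℤ) + 1) * ((k : ℝ) * z i ^ (((k : ℕ) : ℤ) - 1) * f z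
              + (∑ j, z j ^ ((k : ℕ) : ℤ)) * pd i f z))
        = (((n : ℝ) - (k : ℝ)) * ((((m + (n : ℤ) - (k : ℤ) : ℤ) : ℝ) + 1)
              * z i ^ (m + (n : ℤ) - (k : ℤ)) * (z i ^ ((k : ℕ) : ℤ) * f z)
            + z i ^ (m + (n : ℤ) - (k : ℤ) + 1) * ((k : ℝ) * z i ^ (((k : ℕ) : ℤ) - 1) * f z)
            + z i ^ (m + (n : ℤ) - (k : ℤ) + 1) * (z i ^ ((k : ℕ) : ℤ) * pd i f z)))
          + ∑ j ∈ Finset.univ.filter (fun j => j ≠ i),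
              ((n : ℝ) - (k : ℝ)) * ((((m + (n : ℤ) - (k : ℤ) : ℤ) : ℝ) + 1)
                  * z i ^ (m + (n : ℤ) - (k : ℤ)) * (z j ^ ((k : ℕ) : ℤ) * f z)
                + z i ^ (m + (n : ℤ) - (k : ℤ) + 1) * (z j ^ ((k : ℕ) : ℤ) * pd i f z)) := by
      intro k _
      rw [sum_split_i (fun j => z j ^ ((k : ℕ) : ℤ)) i]
      rw [Finset.sum_congr rfl (fun j _ => by ring :
        ∀ j ∈ Finset.univ.filter (fun j => j ≠ i),
          ((n : ℝ) - (k : ℝ)) * ((((m + (n : ℤ) - (k : ℤ) : ℤ) : ℝ) + 1)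
              * z i ^ (m + (n : ℤ) - (k : ℤ)) * (z j ^ ((k : ℕ) : ℤ) * f z)
            + z i ^ (m + (n : ℤ) - (k : ℤ) + 1) * (z j ^ ((k : ℕ) : ℤ) * pd i f z))
          = z j ^ ((k : ℕ) : ℤ) * (((n : ℝ) - (k : ℝ)) * ((((m + (n : ℤ) - (k : ℤ) : ℤ) : ℝ) + 1)
              * z i ^ (m + (n : ℤ) - (k : ℤ)) * f z
            + z i ^ (m + (n : ℤ) - (k : ℤ) + 1) * pd i f z))),
        ← Finset.sum_mul]
      ring
    rw [Finset.sum_congr rfl key, Finset.sum_add_distrib, gaussWW hz0 i, Finset.sum_comm]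
  rw [hK]
  have hperI : ∀ i ∈ Finset.univ, DIAGCAN m n f z i
      = ((m : ℝ) - 2 * (n : ℝ)) * ((((m + (n : ℤ) : ℤ) : ℝ) + 2) * (((m + (n : ℤ) : ℤ) : ℝ) + 1)
            * z i ^ (m + (n : ℤ)) * f z
          + 2 * (((m + (n : ℤ) : ℤ) : ℝ) + 2) * z i ^ (m + (n : ℤ) + 1) * pd i f z
          + z i ^ (m + (n : ℤ) + 2) * pd i (pd i f) z)
        + 2 * (n : ℝ) * ((n : ℝ) + 1) * ((((m + (n : ℤ) : ℤ) : ℝ) + 1) * z i ^ (m + (n : ℤ)) * f z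
          + z i ^ (m + (n : ℤ) + 1) * pd i f z)
        - 2 * (((n : ℝ) * ((n : ℝ) + 1) / 2) * ((((m : ℝ) + (n : ℝ) + 1)
            * (z i ^ (m + (n : ℤ)) * f z)) + z i ^ (m + (n : ℤ) + 1) * pd i f z)) := by
    intro i _
    unfold DIAGCAN
    push_cast
    ring
  have hperP : ∀ i ∈ Finset.univ, ∀ j ∈ Finset.univ.filter (fun j => j ≠ i),
      PAIRCAN m n f z i j
      = ((m : ℝ) - 2 * (n : ℝ)) * (phiX (m + (n : ℤ) + 2) (z i) (z j) * f z
          + phiF (m + (n : ℤ) + 2) (z i) (z j) * pd i f z)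
        + ∑ k ∈ Finset.range n, ((n : ℝ) - (k : ℝ)) * ((((m + (n : ℤ) - (k : ℤ) : ℤ) : ℝ) + 1)
            * z i ^ (m + (n : ℤ) - (k : ℤ)) * (z j ^ ((k : ℕ) : ℤ) * f z)
          + z i ^ (m + (n : ℤ) - (k : ℤ) + 1) * (z j ^ ((k : ℕ) : ℤ) * pd i f z)) := by
    intro i _ j hj
    rw [Finset.mem_filter] at hj
    have hij : j ≠ i := hj.2
    have hzij : z i ≠ z j := fun h => hij (hz h.symm)
    unfold PAIRCAN
    rw [ident2 m n (hz0 i) hzij, ident1 m n (hz0 i) hzij]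
    have hsplit2 : ∀ k ∈ Finset.range n, ((n : ℝ) - (k : ℝ))
          * ((((m + (n : ℤ) - (k : ℤ) : ℤ) : ℝ) + 1)
            * z i ^ (m + (n : ℤ) - (k : ℤ)) * (z j ^ ((k : ℕ) : ℤ) * f z)
          + z i ^ (m + (n : ℤ) - (k : ℤ) + 1) * (z j ^ ((k : ℕ) : ℤ) * pd i f z))
        = (((n : ℝ) - (k : ℝ)) * (((m : ℝ) + (n : ℝ) - (k : ℝ) + 1)
            * z i ^ (m + (n : ℤ) - (k : ℤ)) * z j ^ (k : ℕ))) * f z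
          + (((n : ℝ) - (k : ℝ)) * (z i ^ (m + (n : ℤ) - (k : ℤ) + 1) * z j ^ (k : ℕ))) * pd i f z := by
      intro k _
      rw [zpow_natCast (z j) k]
      push_cast
      ring
    rw [Finset.sum_congr rfl hsplit2, Finset.sum_add_distrib, ← Finset.sum_mul, ← Finset.sum_mul]
    ring
  rw [Finset.sum_congr rfl hperI,
    Finset.sum_congr rfl (fun i hi => Finset.sum_congr rfl (fun j hj => hperP i hi j hj))]
  simp only [Finset.sum_add_distrib, Finset.sum_sub_distrib, Finset.mul_sum, mul_add]
  ring

end RHS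

end CommW

/-- the commutator
`[W^1_n, W^2_m] = (m - 2n) W^2_{m+n} + 2n(n+1) W^1_{m+n} - 2 ∑_{k=0}^{n-1} (n-k) W^1_{m+n-k} W^0_k`
acting on smooth functions, at points with pairwise distinct nonzero coordinates. -/
theorem W1_W2_commutator {N : ℕ} (n : ℕ) (m : ℤ) (hm : -2 ≤ m)
    (f : (Fin N → ℝ) → ℝ) (hf : ContDiff ℝ (⊤ : ℕ∞) f)
    (z : Fin N → ℝ) (hz : Function.Injective z) (hz0 : ∀ i, z i ≠ 0) :
    W1 (n : ℤ) (W2 m f) z - W2 m (W1 (n : ℤ) f) z =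
      ((m : ℝ) - 2 * n) * W2 (m + n) f z + 2 * n * (n + 1) * W1 (m + n) f z -
        2 * ∑ k ∈ Finset.range n,
          ((n : ℝ) - k) * W1 (m + n - k) (W0m (k : ℤ) f) z := by
  exact (CommW.LHS_canon hf hz hz0).trans (CommW.RHS_canon hf hz hz0).symm
end

section
/- Let 𝒲̂_0 = ∑_{k≥1} k t_k 𝓛̂_k with 𝓛̂_k the β-deformed Virasoro operators, and 𝓕̂_1 = 𝓛̂_{-1} = ∑_{k≥1} k t_k ∂/∂t_{k-1}. Then [½𝒲̂_0, 𝓕̂_1] = ∑_{k≥1} k t_k 𝓛̂_{k-1} as operators on ℝ[t_0, t_1, ...]. -/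
/-!
`𝓕̂_1 = 𝓛̂_{-1}` is a derivation with `𝓕̂_1 t_i = (i+1) t_{i+1}`. Checking on generators gives
`[∂_i, 𝓕̂_1] = i ∂_{i-1}` and `[∑ k t_k ∂_{k+m}, 𝓕̂_1] = (m+1) ∑ k t_k ∂_{k+m-1}`, whence the
Virasoro relation `[𝓛̂_m, 𝓕̂_1] = (m+1) 𝓛̂_{m-1}` for `m ≥ 1`. Together with `[𝓕̂_1, t_k] = (k+1) t_{k+1}`
this gives `[𝒲̂_0, 𝓕̂_1] = ∑ k(k+1) t_k 𝓛̂_{k-1} - ∑ k(k+1) t_{k+1} 𝓛̂_k`, and shifting the second sum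
leaves `∑ 2k t_k 𝓛̂_{k-1}`. All sums are finite because `𝓛̂_k P = 0` once `k` is at least twice the
largest variable index of `P`.
-/

open MvPolynomial

/-- `𝒲̂_0 = ∑_{k≥1} k t_k 𝓛̂_k`. -/
noncomputable def Wbeta0 (β : ℝ) (P : MvPolynomial ℕ ℝ) : MvPolynomial ℕ ℝ :=
  ∑ᶠ k : ℕ, if 1 ≤ k then (k : ℝ) • (X k * Lbeta β k P) else 0

open Finset

theorem finsum_eq_finsum_add_of_eq_zero {M : Type*} [AddCommMonoid M] {f : ℕ → M} {s : ℕ}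
    (h : ∀ i < s, f i = 0) : ∑ᶠ i, f i = ∑ᶠ j, f (j + s) := by
  rw [← finsum_mem_range (add_left_injective s), ← finsum_mem_univ]
  refine finsum_mem_inter_support_eq' _ _ _ fun i hi => ?_
  have : s ≤ i := not_lt.mp fun hlt => hi (h i hlt)
  simpa using ⟨i - s, by omega⟩

theorem finsum_ite_one_le_smul {V : Type*} [AddCommGroup V] [Module ℝ V] {f : ℕ → V} {M : ℕ}
    (h : ∀ k ≥ M, f k = 0) :
    ∑ᶠ k : ℕ, (if 1 ≤ k then (k : ℝ) • f k else 0) = ∑ k ∈ range M, (k : ℝ) • f k := by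
  rw [finsum_eq_sum_of_support_subset _ (s := range M) fun k hk => ?_]
  · refine sum_congr rfl fun k _ => ?_
    rcases k with _ | k <;> simp
  · exact mem_range.mpr (lt_of_not_ge fun hkM => hk (by simp [h k hkM]))

theorem sum_range_mul_succ_smul_sub_succ {V : Type*} [AddCommGroup V] [Module ℝ V] (G : ℕ → V)
    (M : ℕ) : ∑ k ∈ range M, ((k : ℝ) * (k + 1)) • (G k - G (k + 1)) =
      ∑ k ∈ range M, (2 * (k : ℝ)) • G k - (((M : ℝ) - 1) * M) • G M := by
  induction M with
  | zero => simp
  | succ M ih =>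
    rw [sum_range_succ, ih, sum_range_succ]
    push_cast
    module

namespace MvPolynomial

variable {R σ : Type*} [CommRing R]

theorem derivation_eq_finsum_pderiv (D : Derivation R (MvPolynomial σ R) (MvPolynomial σ R))
    (p : MvPolynomial σ R) : D p = ∑ᶠ i, D (X i) * pderiv i p := by
  classical
  have hsupp : (Function.support fun i => D (X i) * pderiv i p) ⊆ p.vars := fun i hi => by
    by_contra h
    exact hi (by simp only [pderiv_eq_zero_of_notMem_vars h, mul_zero])
  let D' : Derivation R (MvPolynomial σ R) (MvPolynomial σ R) := ∑ i ∈ p.vars, D (X i) • pderiv i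
  have hD' (q : MvPolynomial σ R) : D' q = ∑ i ∈ p.vars, D (X i) * pderiv i q := by
    change Derivation.coeFnAddMonoidHom D' q = _
    simp [D', Finset.sum_apply]
  rw [finsum_eq_sum_of_support_subset _ hsupp, ← hD']
  refine derivation_eq_of_forall_mem_vars fun j hj => ?_
  rw [hD', Finset.sum_eq_single_of_mem j hj fun i _ hij => by simp [pderiv_X_of_ne hij.symm]]
  simp

theorem pderiv_comm (i j : σ) (p : MvPolynomial σ R) :
    pderiv i (pderiv j p) = pderiv j (pderiv i p) := by
  classical
  have h : ⁅(pderiv i : Derivation R (MvPolynomial σ R) (MvPolynomial σ R)), pderiv j⁆ = 0 :=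
    derivation_ext fun k => by
      rw [Derivation.commutator_apply, pderiv_X, pderiv_X, Pi.single_apply, Pi.single_apply]
      split_ifs <;> simp
  have := DFunLike.congr_fun h p
  rwa [Derivation.commutator_apply, Derivation.zero_apply, sub_eq_zero] at this

theorem pderiv_eq_zero_of_vars_subset_range {p : MvPolynomial ℕ R} {N i : ℕ}
    (hp : p.vars ⊆ range N) (hi : N ≤ i) : pderiv i p = 0 :=
  pderiv_eq_zero_of_notMem_vars fun h => (mem_range.mp (hp h)).not_ge hi

end MvPolynomial

/-- The first-order part `∑_{k ≥ 1} k t_k ∂_{k+s-1}` of `𝓛̂_{s-1}` (note the shift of index), as the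
derivation sending `t_i` to `(i-s+1) t_{i-s+1}`; `firstOrderPart 0` is `𝓕̂_1 = 𝓛̂_{-1}`. -/
noncomputable def firstOrderPart (s : ℕ) : Derivation ℝ (MvPolynomial ℕ ℝ) (MvPolynomial ℕ ℝ) :=
  mkDerivation ℝ fun i => if s ≤ i then ((i - s + 1 : ℕ) : ℝ) • X (i - s + 1) else 0

/-- The second-order part of `𝓛̂_m` (indexed by `m` itself, unlike `firstOrderPart`). -/
noncomputable def secondOrderPart (m : ℕ) (p : MvPolynomial ℕ ℝ) : MvPolynomial ℕ ℝ :=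
  ∑ q ∈ antidiagonal m, pderiv q.1 (pderiv q.2 p)

theorem firstOrderPart_X_add (s d : ℕ) :
    firstOrderPart s (X (d + s)) = ((d : ℝ) + 1) • X (d + 1) := by
  simp [firstOrderPart, mkDerivation_X]

theorem firstOrderPart_X_of_lt {s i : ℕ} (h : i < s) : firstOrderPart s (X i) = 0 := by
  simp [firstOrderPart, mkDerivation_X, h.not_ge]

theorem firstOrderPart_zero_X (i : ℕ) : firstOrderPart 0 (X i) = ((i : ℝ) + 1) • X (i + 1) :=
  firstOrderPart_X_add 0 i

theorem firstOrderPart_apply (s : ℕ) (p : MvPolynomial ℕ ℝ) :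
    firstOrderPart s p = ∑ᶠ k : ℕ, ((k : ℝ) + 1) • (X (k + 1) * pderiv (k + s) p) := by
  rw [derivation_eq_finsum_pderiv,
    finsum_eq_finsum_add_of_eq_zero fun _ hi => by rw [firstOrderPart_X_of_lt hi, zero_mul]]
  simp_rw [firstOrderPart_X_add, smul_mul_assoc]

theorem firstOrderPart_eq_zero {s N : ℕ} {p : MvPolynomial ℕ ℝ} (hp : p.vars ⊆ range N)
    (hs : N ≤ s) : firstOrderPart s p = 0 :=
  derivation_eq_zero_of_forall_mem_vars fun _ hi =>
    firstOrderPart_X_of_lt ((mem_range.mp (hp hi)).trans_le hs)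

theorem firstOrderPart_zero_X_mul (k : ℕ) (p : MvPolynomial ℕ ℝ) :
    firstOrderPart 0 (X k * p) = X k * firstOrderPart 0 p + ((k : ℝ) + 1) • (X (k + 1) * p) := by
  rw [Derivation.leibniz, firstOrderPart_zero_X, smul_eq_mul, smul_eq_mul, mul_smul_comm,
    mul_comm p]

theorem pderiv_firstOrderPart_zero (i : ℕ) (p : MvPolynomial ℕ ℝ) :
    pderiv i (firstOrderPart 0 p) =
      firstOrderPart 0 (pderiv i p) + (i : ℝ) • pderiv (i - 1) p := by
  have h : ⁅(pderiv i : Derivation ℝ (MvPolynomial ℕ ℝ) (MvPolynomial ℕ ℝ)), firstOrderPart 0⁆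
      = (i : ℝ) • pderiv (i - 1) :=
    derivation_ext fun j => by
      rw [Derivation.commutator_apply, firstOrderPart_zero_X, Derivation.smul_apply]
      rcases i with _ | i
      · simp [pderiv_X, Pi.single_apply, apply_ite]
      · by_cases hji : j = i
        · simp [hji]
        · simp [pderiv_X, Pi.single_apply, apply_ite, hji]
  have := DFunLike.congr_fun h p
  rw [Derivation.commutator_apply, Derivation.smul_apply] at this
  rw [← this, add_sub_cancel]

theorem firstOrderPart_commutator (s : ℕ) :
    ⁅firstOrderPart (s + 1), firstOrderPart 0⁆ = ((s : ℝ) + 1) • firstOrderPart s :=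
  derivation_ext fun j => by
    rw [Derivation.commutator_apply, Derivation.smul_apply, firstOrderPart_zero_X,
      Derivation.map_smul]
    obtain hj | ⟨d, rfl⟩ := (lt_or_ge j s).imp_right Nat.exists_eq_add_of_le'
    · rw [firstOrderPart_X_of_lt (by omega), firstOrderPart_X_of_lt (by omega),
        firstOrderPart_X_of_lt hj]
      simp
    · rw [show d + s + 1 = d + (s + 1) by ring, firstOrderPart_X_add, firstOrderPart_X_add]
      rcases d with _ | d
      · rw [firstOrderPart_X_of_lt (by omega)]
        simp
      · rw [show d + 1 + s = d + (s + 1) by ring, firstOrderPart_X_add, Derivation.map_smul,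
          firstOrderPart_zero_X, smul_smul, smul_smul, smul_smul, ← sub_smul]
        congr 1
        push_cast
        ring

theorem firstOrderPart_commutator_apply (s : ℕ) (p : MvPolynomial ℕ ℝ) :
    firstOrderPart (s + 1) (firstOrderPart 0 p) - firstOrderPart 0 (firstOrderPart (s + 1) p) =
      ((s : ℝ) + 1) • firstOrderPart s p := by
  rw [← Derivation.commutator_apply, firstOrderPart_commutator, Derivation.smul_apply]

theorem secondOrderPart_eq_zero {m N : ℕ} {p : MvPolynomial ℕ ℝ} (hp : p.vars ⊆ range N)
    (hm : 2 * N ≤ m) : secondOrderPart m p = 0 := by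
  refine sum_eq_zero fun q hq => ?_
  rw [HasAntidiagonal.mem_antidiagonal] at hq
  rcases le_total N q.2 with h | h
  · rw [pderiv_eq_zero_of_vars_subset_range hp h, map_zero]
  · rw [pderiv_comm, pderiv_eq_zero_of_vars_subset_range hp (by omega), map_zero]

theorem secondOrderPart_commutator (m : ℕ) (p : MvPolynomial ℕ ℝ) :
    secondOrderPart (m + 1) (firstOrderPart 0 p) - firstOrderPart 0 (secondOrderPart (m + 1) p) =
      ((m : ℝ) + 2) • secondOrderPart m p := by
  have hterm (q : ℕ × ℕ) : pderiv q.1 (pderiv q.2 (firstOrderPart 0 p)) =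
      firstOrderPart 0 (pderiv q.1 (pderiv q.2 p)) + (q.1 : ℝ) • pderiv (q.1 - 1) (pderiv q.2 p) +
        (q.2 : ℝ) • pderiv q.1 (pderiv (q.2 - 1) p) := by
    rw [pderiv_firstOrderPart_zero, map_add, Derivation.map_smul, pderiv_firstOrderPart_zero]
  simp only [secondOrderPart, hterm, sum_add_distrib, map_sum, add_sub_right_comm, sub_self,
    zero_add]
  rw [Nat.sum_antidiagonal_succ, Nat.sum_antidiagonal_succ']
  simp only [Nat.cast_zero, zero_smul, zero_add, Nat.add_sub_cancel, ← sum_add_distrib,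
    smul_sum, ← add_smul]
  refine sum_congr rfl fun q hq => ?_
  rw [HasAntidiagonal.mem_antidiagonal] at hq
  congr 1
  rw [← hq]
  push_cast
  ring

theorem finsum_X_mul_pderiv_eq_firstOrderPart {n : ℤ} (hn : -1 ≤ n) (p : MvPolynomial ℕ ℝ) :
    (∑ᶠ k : ℕ, if 1 ≤ k then (k : ℝ) • (X k * pderiv (((k : ℤ) + n).toNat) p) else 0) =
      firstOrderPart (n + 1).toNat p := by
  rw [firstOrderPart_apply, finsum_eq_finsum_add_of_eq_zero (s := 1) (by simp)]
  refine finsum_congr fun k => ?_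
  rw [if_pos (by omega), show (((k + 1 : ℕ) : ℤ) + n).toNat = k + (n + 1).toNat by omega]
  push_cast
  rfl

theorem Lbeta_neg_one (β : ℝ) (p : MvPolynomial ℕ ℝ) : Lbeta β (-1) p = firstOrderPart 0 p := by
  rw [Lbeta, finsum_X_mul_pderiv_eq_firstOrderPart le_rfl]
  simp

theorem Lbeta_natCast (β : ℝ) (m : ℕ) (p : MvPolynomial ℕ ℝ) :
    Lbeta β m p = firstOrderPart (m + 1) p + β • secondOrderPart m p +
      ((1 - β) * ((m : ℝ) + 1)) • pderiv m p := by
  rw [Lbeta, finsum_X_mul_pderiv_eq_firstOrderPart (by omega), secondOrderPart,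
    Nat.sum_antidiagonal_eq_sum_range_succ_mk]
  simp

theorem Lbeta_natCast_eq_zero (β : ℝ) {m N : ℕ} {p : MvPolynomial ℕ ℝ} (hp : p.vars ⊆ range N)
    (hm : 2 * N ≤ m) : Lbeta β m p = 0 := by
  rw [Lbeta_natCast, firstOrderPart_eq_zero hp (by omega), secondOrderPart_eq_zero hp hm,
    pderiv_eq_zero_of_vars_subset_range hp (by omega)]
  simp

theorem eventually_Lbeta_natCast_eq_zero (β : ℝ) (p : MvPolynomial ℕ ℝ) :
    ∀ᶠ m : ℕ in Filter.atTop, Lbeta β m p = 0 := by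
  obtain ⟨N, hN⟩ := p.vars.exists_nat_subset_range
  exact Filter.eventually_atTop.2 ⟨2 * N, fun m hm => Lbeta_natCast_eq_zero β hN hm⟩

theorem Lbeta_commutator (β : ℝ) (m : ℕ) (p : MvPolynomial ℕ ℝ) :
    Lbeta β (m + 1 : ℕ) (firstOrderPart 0 p) - firstOrderPart 0 (Lbeta β (m + 1 : ℕ) p) =
      ((m : ℝ) + 2) • Lbeta β m p := by
  have h1 := firstOrderPart_commutator_apply (m + 1) p
  have h2 := secondOrderPart_commutator m p
  have h3 := pderiv_firstOrderPart_zero (m + 1) p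
  simp only [Lbeta_natCast, map_add, Derivation.map_smul]
  push_cast at h1 h3 ⊢
  linear_combination (norm := module) h1 + β • h2 + ((1 - β) * ((m : ℝ) + 2)) • h3

-- The right side has the shape `G k - G (k + 1)` with `G j = t_j 𝓛̂_{j-1} p`, ready for
-- `sum_range_mul_succ_smul_sub_succ`.
theorem smul_X_mul_Lbeta_commutator (β : ℝ) (k : ℕ) (p : MvPolynomial ℕ ℝ) :
    (k : ℝ) • (X k * Lbeta β k (firstOrderPart 0 p)) -
        firstOrderPart 0 ((k : ℝ) • (X k * Lbeta β k p)) =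
      ((k : ℝ) * (k + 1)) •
        (X k * Lbeta β ((k : ℤ) - 1) p - X (k + 1) * Lbeta β (((k + 1 : ℕ) : ℤ) - 1) p) := by
  rcases k with _ | k
  · simp
  · rw [Derivation.map_smul, ← smul_sub, firstOrderPart_zero_X_mul, ← sub_sub, ← mul_sub,
      Lbeta_commutator, mul_smul_comm]
    push_cast
    simp only [add_sub_cancel_right]
    module

/-- `[½𝒲̂_0, 𝓕̂_1] = ∑_{k≥1} k t_k 𝓛̂_{k-1}` where `𝓕̂_1 = 𝓛̂_{-1}`. -/
theorem beta_F2_eq (β : ℝ) (P : MvPolynomial ℕ ℝ) :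
    (1 / 2 : ℝ) • (Wbeta0 β (Lbeta β (-1) P) - Lbeta β (-1) (Wbeta0 β P)) =
      ∑ᶠ k : ℕ, if 1 ≤ k then (k : ℝ) • (X k * Lbeta β ((k : ℤ) - 1) P) else 0 := by
  obtain ⟨N, hN⟩ := ((eventually_Lbeta_natCast_eq_zero β P).and
    (eventually_Lbeta_natCast_eq_zero β (firstOrderPart 0 P))).exists_forall_of_atTop
  set G : ℕ → MvPolynomial ℕ ℝ := fun k => X k * Lbeta β ((k : ℤ) - 1) P
  have hG_succ (k : ℕ) : G (k + 1) = X (k + 1) * Lbeta β k P := by simp [G]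
  rw [Wbeta0, Wbeta0, Lbeta_neg_one, Lbeta_neg_one,
    finsum_ite_one_le_smul (M := N + 1) fun k hk => by rw [(hN k (by omega)).2, mul_zero],
    finsum_ite_one_le_smul (M := N + 1) fun k hk => by rw [(hN k (by omega)).1, mul_zero],
    finsum_ite_one_le_smul (f := G) (M := N + 1) fun k hk => ?_, map_sum, ← sum_sub_distrib,
    sum_congr rfl fun k _ => smul_X_mul_Lbeta_commutator β k P]
  · calc (1 / 2 : ℝ) • ∑ k ∈ range (N + 1), ((k : ℝ) * (k + 1)) • (G k - G (k + 1))
        = (1 / 2 : ℝ) • ∑ k ∈ range (N + 1), (2 * (k : ℝ)) • G k := by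
          rw [sum_range_mul_succ_smul_sub_succ, hG_succ, (hN N le_rfl).1, mul_zero, smul_zero,
            sub_zero]
      _ = ∑ k ∈ range (N + 1), (k : ℝ) • G k := by
          rw [smul_sum]
          exact sum_congr rfl fun k _ => by module
  · obtain ⟨j, rfl⟩ := Nat.exists_eq_add_of_le' (by omega : 1 ≤ k)
    rw [hG_succ, (hN j (by omega)).1, mul_zero]
end
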